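/- arXiv:2212.06897 — 9 statements merged into one kernel-verified Lean document; each statement's English description precedes it below -/
import Mathlib

section
/- Let G be a 2-connected graph and let x, y be distinct vertices of G. For any x,y-path W in G, there exist two internally disjoint x,y-paths P1, P2 in G each of which is aligned with W. -/
open SimpleGraph

/-- `P'` is aligned with `P` (both starting at `x`): shared vertices appear in the
same relative order. -/
def Aligned {V : Type*} [DecidableEq V] {G : SimpleGraph V} {x a b : V}
    (P : G.Walk x a) (P' : G.Walk x b) : Prop :=
  ∀ u v : V, u ∈ P.support → v ∈ P.support → u ∈ P'.support → v ∈ P'.support →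
    P.support.idxOf u < P.support.idxOf v →
    P'.support.idxOf u < P'.support.idxOf v

/-- Two paths with common origin `x` are internally disjoint: every common vertex is a
common endpoint. -/
def IntDisjoint {V : Type*} {G : SimpleGraph V} {x a b : V}
    (P : G.Walk x a) (Q : G.Walk x b) : Prop :=
  ∀ v : V, v ∈ P.support → v ∈ Q.support → (v = x ∨ v = a) ∧ (v = x ∨ v = b)

/-- 2-connected: at least 3 vertices, connected, and no cut vertex. -/
def TwoConnected {V : Type*} [Fintype V] (G : SimpleGraph V) : Prop :=
  3 ≤ Fintype.card V ∧ G.Connected ∧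
    ∀ v : V, ((⊤ : G.Subgraph).deleteVerts {v}).coe.Connected

/-- A lollipop: a cycle `C` and a path `P` whose vertex sets meet exactly in the
vertex `a`, an endpoint of `P` lying on `C`. -/
def IsLollipop {V : Type*} {G : SimpleGraph V} {v a w : V}
    (C : G.Walk v v) (P : G.Walk a w) : Prop :=
  C.IsCycle ∧ P.IsPath ∧ a ∈ C.support ∧ ∀ u ∈ C.support, u ∈ P.support → u = a

/-!
Induction on `W`. Write `W = W' + wy` and let `Q₁, Q₂` be internally disjoint `x,w`-paths aligned
with `W'`. As `w` is not a cut vertex, some `x,y`-path avoids `w`; let `R` be its part after its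
last vertex `t` on `Q₁ ∪ Q₂ ∪ W'`. If `t` is on `Q₁`, say, then `Q₁` up to `t` followed by `R`,
together with `Q₂` followed by `wy`, are the two paths. Otherwise `t` lies on `W'` only, and the
same works with `R` preceded by the stretch of `W'` from its last vertex `α` on `Q₁ ∪ Q₂` before
`t`. Alignment holds because the vertices of `W'` on `Q₁` before `α` precede `α` on `W'`, while
the ones after `α` come in `W'`-order and after `α`.
-/

namespace List

variable {α : Type*} [DecidableEq α]

/-- `Aligned W P` unfolds to `W.support.Aligned P.support`. -/
def Aligned (l l' : List α) : Prop :=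
  ∀ u v, u ∈ l → v ∈ l → u ∈ l' → v ∈ l' → l.idxOf u < l.idxOf v → l'.idxOf u < l'.idxOf v

theorem aligned_refl (l : List α) : l.Aligned l :=
  fun _ _ _ _ _ _ h ↦ h

theorem aligned_of_forall_mem_eq {l l' : List α} {t : α} (h : ∀ u ∈ l, u ∈ l' → u = t) :
    l.Aligned l' := by
  intro u v hu hv hu' hv' huv
  rw [h u hu hu', h v hv hv'] at huv
  exact absurd huv (lt_irrefl _)

namespace Aligned

variable {l l' l₁ l₂ : List α}

theorem of_prefix (h : l.Aligned l') (hp : l₁ <+: l') : l.Aligned l₁ := by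
  obtain ⟨r, rfl⟩ := hp
  intro u v hu hv hu₁ hv₁ huv
  simpa [idxOf_append_of_mem hu₁, idxOf_append_of_mem hv₁] using
    h u v hu hv (mem_append_left _ hu₁) (mem_append_left _ hv₁) huv

theorem of_suffix (h : l.Aligned l') (hnd : l'.Nodup) (hs : l₂ <:+ l') : l.Aligned l₂ := by
  obtain ⟨r, rfl⟩ := hs
  have hdisj := disjoint_of_nodup_append hnd
  intro u v hu hv hu₂ hv₂ huv
  have := h u v hu hv (mem_append_right _ hu₂) (mem_append_right _ hv₂) huv
  rw [idxOf_append_of_notMem (fun h ↦ hdisj h hu₂),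
    idxOf_append_of_notMem (fun h ↦ hdisj h hv₂)] at this
  omega

theorem append (h₁ : l.Aligned l₁) (h₂ : l.Aligned l₂)
    (h : ∀ u ∈ l₁, ∀ v ∈ l₂, u ∈ l → v ∈ l → l.idxOf u ≤ l.idxOf v) :
    l.Aligned (l₁ ++ l₂) := by
  intro u v hu hv hu' hv' huv
  by_cases hu₁ : u ∈ l₁ <;> by_cases hv₁ : v ∈ l₁
  · rw [idxOf_append_of_mem hu₁, idxOf_append_of_mem hv₁]
    exact h₁ u v hu hv hu₁ hv₁ huv
  · rw [idxOf_append_of_mem hu₁, idxOf_append_of_notMem hv₁]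
    exact (idxOf_lt_length_iff.2 hu₁).trans_le (Nat.le_add_right _ _)
  · have := h v hv₁ u ((mem_append.1 hu').resolve_left hu₁) hv hu
    omega
  · rw [idxOf_append_of_notMem hu₁, idxOf_append_of_notMem hv₁]
    have := h₂ u v hu hv ((mem_append.1 hu').resolve_left hu₁)
      ((mem_append.1 hv').resolve_left hv₁) huv
    omega

theorem idxOf_le_idxOf (h : l.Aligned l') {u v : α} (hu : u ∈ l) (hv : v ∈ l) (hu' : u ∈ l')
    (hv' : v ∈ l') (huv : l'.idxOf u ≤ l'.idxOf v) : l.idxOf u ≤ l.idxOf v :=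
  not_lt.1 fun hvu ↦ (h v u hv hu hv' hu' hvu).not_ge huv

theorem concat (h : l.Aligned l') {y : α} (hy : y ∉ l)
    (hlast : ∀ u ∈ l', l'.idxOf u ≤ l'.idxOf y) : (l ++ [y]).Aligned l' := by
  intro u v hu hv hu' hv' huv
  have mem_of_ne {a : α} (ha : a ∈ l ++ [y]) (hay : a ≠ y) : a ∈ l :=
    (mem_append.1 ha).resolve_right (by simpa using hay)
  by_cases hvy : v = y
  · subst hvy
    have huv' : u ≠ v := by rintro rfl; exact lt_irrefl _ huv
    exact (hlast u hu').lt_of_ne (mt (idxOf_inj hu').1 huv')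
  · have hvl := mem_of_ne hv hvy
    have hul : u ∈ l := by
      refine mem_of_ne hu fun huy ↦ ?_
      subst huy
      rw [idxOf_append_of_notMem hy, idxOf_append_of_mem hvl] at huv
      have := idxOf_lt_length_iff.2 hvl
      omega
    rw [idxOf_append_of_mem hul, idxOf_append_of_mem hvl] at huv
    exact h u v hul hvl hu' hv' huv

end Aligned

theorem aligned_of_infix {l l' : List α} (hnd : l.Nodup) (h : l' <:+: l) : l.Aligned l' := by
  obtain ⟨m, hm, hml⟩ := infix_iff_suffix_prefix.1 h
  exact ((aligned_refl l).of_prefix hml).of_suffix (hnd.sublist hml.sublist) hm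

end List

namespace SimpleGraph

variable {V : Type*} {G : SimpleGraph V}

namespace Walk

variable {u v w : V}

theorem IsPath.append_of_inter {p : G.Walk u v} {q : G.Walk v w} (hp : p.IsPath) (hq : q.IsPath)
    (h : ∀ a ∈ p.support, a ∈ q.support → a = v) : (p.append q).IsPath := by
  rw [isPath_def, support_append, List.nodup_append]
  refine ⟨hp.support_nodup, hq.support_nodup.sublist (List.tail_sublist _), ?_⟩
  rintro a hap b hbq rfl
  have hv : v ∉ q.support.tail := (List.nodup_cons.1 (q.cons_tail_support ▸ hq.support_nodup)).1
  exact hv (h a hap (List.mem_of_mem_tail hbq) ▸ hbq)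

theorem exists_suffix_last_mem (S : Set V) (p : G.Walk u v) (h : ∃ a ∈ p.support, a ∈ S) :
    ∃ (t : V) (q : G.Walk t v), t ∈ S ∧ (∀ a ∈ q.support, a ∈ S → a = t) ∧
      q.support <:+ p.support := by
  induction p with
  | nil =>
    obtain ⟨a, ha, haS⟩ := h
    rw [support_nil, List.mem_singleton] at ha
    exact ⟨_, nil, ha ▸ haS, by simp, List.suffix_refl _⟩
  | @cons u u' v huu' p ih =>
    by_cases hp : ∃ a ∈ p.support, a ∈ S
    · obtain ⟨t, q, htS, hq, hsuf⟩ := ih hp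
      exact ⟨t, q, htS, hq, hsuf.trans (by simp)⟩
    · simp only [not_exists, not_and] at hp
      have hmem (a : V) (ha : a ∈ (cons huu' p).support) (haS : a ∈ S) : a = u := by
        rw [support_cons, List.mem_cons] at ha
        exact ha.resolve_right fun hap ↦ hp a hap haS
      obtain ⟨a, ha, haS⟩ := h
      exact ⟨u, cons huu' p, hmem a ha haS ▸ haS, hmem, List.suffix_refl _⟩

variable [DecidableEq V]

theorem IsPath.idxOf_le_idxOf_end {p : G.Walk u v} (hp : p.IsPath) (hw : w ∈ p.support) :
    p.support.idxOf w ≤ p.support.idxOf v := by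
  have hs : p.support = p.support.dropLast ++ [v] := by
    conv_lhs => rw [← List.dropLast_append_getLast p.support_ne_nil, p.getLast_support]
  have hnd := hp.support_nodup
  rw [hs, List.nodup_append] at hnd
  have hv : v ∉ p.support.dropLast := fun h ↦ hnd.2.2 v h v (List.mem_singleton_self v) rfl
  rw [hs] at hw ⊢
  rcases List.mem_append.1 hw with hw | hw
  · rw [List.idxOf_append_of_mem hw, List.idxOf_append_of_notMem hv]
    exact (List.idxOf_lt_length_of_mem hw).le.trans (Nat.le_add_right _ _)
  · rw [List.mem_singleton.1 hw]

end Walk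

theorem exists_isPath_notMem_support {w : V}
    (hw : ((⊤ : G.Subgraph).deleteVerts {w}).coe.Connected) {a b : V} (ha : a ≠ w) (hb : b ≠ w) :
    ∃ p : G.Walk a b, p.IsPath ∧ w ∉ p.support := by
  classical
  obtain ⟨p, hp⟩ := (Subgraph.preconnected_iff_forall_exists_walk_subgraph _).1
    (Subgraph.connected_iff'.2 hw).preconnected (u := a) (v := b) (by simp [ha]) (by simp [hb])
  refine ⟨p.bypass, p.bypass_isPath, fun hwp ↦ ?_⟩
  have := Subgraph.verts_mono hp ((p.mem_verts_toSubgraph).2 (p.support_bypass_subset_support hwp))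
  simp at this

end SimpleGraph

section AlignedPaths

variable {V : Type*} {G : SimpleGraph V}

theorem IntDisjoint.symm {x w : V} {Q₁ Q₂ : G.Walk x w} (h : IntDisjoint Q₁ Q₂) :
    IntDisjoint Q₂ Q₁ :=
  fun v h₂ h₁ ↦ (h v h₁ h₂).symm

variable [DecidableEq V]

theorem Aligned.concat_left {x w y : V} {W : G.Walk x w} {P : G.Walk x y} (h : Aligned W P)
    (hP : P.IsPath) (hyW : y ∉ W.support) (hwy : G.Adj w y) : Aligned (W.concat hwy) P := by
  show (W.concat hwy).support.Aligned P.support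
  rw [Walk.support_concat]
  exact List.Aligned.concat h hyW fun _ hu ↦ hP.idxOf_le_idxOf_end hu

theorem Aligned.concat_right {x a w y : V} {W : G.Walk x a} {Q : G.Walk x w} (h : Aligned W Q)
    (hyW : y ∉ W.support) (hwy : G.Adj w y) : Aligned W (Q.concat hwy) := by
  show W.support.Aligned (Q.concat hwy).support
  rw [Walk.support_concat]
  exact List.Aligned.append h (List.aligned_of_forall_mem_eq (t := y) fun u _ hu ↦
    List.mem_singleton.1 hu) fun _ _ v hv _ hvW ↦ absurd (List.mem_singleton.1 hv ▸ hvW) hyW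

def HasAlignedPathPair {x y : V} (W : G.Walk x y) : Prop :=
  ∃ P₁ P₂ : G.Walk x y, P₁.IsPath ∧ P₂.IsPath ∧ P₁ ≠ P₂ ∧ IntDisjoint P₁ P₂ ∧
    Aligned W P₁ ∧ Aligned W P₂

/-- The second path goes from `x` to a neighbour `z ≠ x` of `y` avoiding `y`, then to `y`; such a
`z` is the second vertex of a path from `y` to a third vertex avoiding `x`. -/
theorem hasAlignedPathPair_concat_nil [Fintype V] (hcard : 3 ≤ Fintype.card V)
    (hcut : ∀ v : V, ((⊤ : G.Subgraph).deleteVerts {v}).coe.Connected) {x y : V}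
    (hxy : G.Adj x y) : HasAlignedPathPair (Walk.nil.concat hxy) := by
  obtain ⟨u, -, hu⟩ := Finset.exists_mem_notMem_of_card_lt_card
    (s := {x, y}) (t := Finset.univ) ((Finset.card_le_two).trans_lt hcard)
  have hux : u ≠ x := fun h ↦ hu (by simp [h])
  have huy : u ≠ y := fun h ↦ hu (by simp [h])
  obtain ⟨p, -, hxp⟩ := exists_isPath_notMem_support (hcut x) hxy.ne' hux
  have hp : ¬ p.Nil := Walk.not_nil_of_ne huy.symm
  have hzp : p.snd ∈ p.support := List.mem_of_mem_tail (Walk.snd_mem_tail_support hp)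
  have hzx : p.snd ≠ x := fun h ↦ hxp (h ▸ hzp)
  obtain ⟨A, hA, hyA⟩ := exists_isPath_notMem_support (hcut y) hxy.ne (Walk.adj_snd hp).ne'
  have hzA : p.snd ∈ (A.concat (Walk.adj_snd hp).symm).support := by simp
  refine ⟨_, A.concat (Walk.adj_snd hp).symm, Walk.IsPath.of_adj hxy, hA.concat hyA _, ?_, ?_,
    List.aligned_refl _, Aligned.concat_left ?_ (hA.concat hyA _) (by simpa using hxy.ne') hxy⟩
  · intro h
    rw [← h] at hzA
    simp [hzx, (Walk.adj_snd hp).ne'] at hzA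
  · intro v hv _
    simp only [Walk.support_cons, Walk.support_nil, List.mem_cons, List.not_mem_nil,
      or_false] at hv
    exact ⟨hv, hv⟩
  · exact List.aligned_of_forall_mem_eq (t := x) fun u hu _ ↦ by simpa using hu

/-- A detour for the cycle `Q₁ ∪ Q₂`: a path `E` from a vertex `α` of the cycle with no other
vertex on it, avoiding `w`, and meeting `W` in `W`'s order and only if it starts on `W`. -/
structure IsDetour {x w α y : V} (W Q₁ Q₂ : G.Walk x w) (E : G.Walk α y) : Prop where
  isPath : E.IsPath
  start_mem : α ∈ Q₁.support ∨ α ∈ Q₂.support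
  notMem_of_ne_start : ∀ v ∈ E.support, v ≠ α → v ∉ Q₁.support ∧ v ∉ Q₂.support
  notMem : w ∉ E.support
  aligned : W.support.Aligned E.support
  start_mem_of_mem : ∀ v ∈ E.support, v ∈ W.support → α ∈ W.support

theorem IsDetour.swap {x w α y : V} {W Q₁ Q₂ : G.Walk x w} {E : G.Walk α y}
    (hE : IsDetour W Q₁ Q₂ E) : IsDetour W Q₂ Q₁ E :=
  ⟨hE.isPath, hE.start_mem.symm, fun v hv hvα ↦ (hE.notMem_of_ne_start v hv hvα).symm,
    hE.notMem, hE.aligned, hE.start_mem_of_mem⟩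

theorem IsDetour.aligned_takeUntil_append {x w α y : V} {W Q₁ Q₂ : G.Walk x w}
    {E : G.Walk α y} (hE : IsDetour W Q₁ Q₂ E) (hQ₁ : Q₁.IsPath) (hal₁ : Aligned W Q₁)
    (hα : α ∈ Q₁.support) : Aligned W ((Q₁.takeUntil α hα).append E) := by
  show W.support.Aligned ((Q₁.takeUntil α hα).append E).support
  rw [Walk.support_append]
  have halA := List.Aligned.of_prefix hal₁ (Q₁.support_takeUntil_prefix_support hα)
  refine halA.append (hE.aligned.of_suffix hE.isPath.support_nodup (List.tail_suffix _)) ?_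
  intro u hu v hv huW hvW
  have hv' := List.mem_of_mem_tail hv
  have hαW := hE.start_mem_of_mem v hv' hvW
  calc W.support.idxOf u ≤ W.support.idxOf α :=
        halA.idxOf_le_idxOf huW hαW hu (Walk.end_mem_support _)
          ((hQ₁.takeUntil hα).idxOf_le_idxOf_end hu)
    _ ≤ W.support.idxOf v :=
        hE.aligned.idxOf_le_idxOf hαW hvW E.start_mem_support hv'
          (by rw [← E.cons_tail_support, List.idxOf_cons_self]; exact Nat.zero_le _)

theorem IsDetour.hasAlignedPathPair {x w α y : V} {W Q₁ Q₂ : G.Walk x w} {E : G.Walk α y}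
    (hE : IsDetour W Q₁ Q₂ E) (hyW : y ∉ W.support) (hwy : G.Adj w y)
    (hQ₁ : Q₁.IsPath) (hQ₂ : Q₂.IsPath) (hQ : IntDisjoint Q₁ Q₂)
    (hal₁ : Aligned W Q₁) (hal₂ : Aligned W Q₂) : HasAlignedPathPair (W.concat hwy) := by
  wlog hα : α ∈ Q₁.support generalizing Q₁ Q₂
  · exact this hE.swap hQ₂ hQ₁ hQ.symm hal₂ hal₁ (hE.start_mem.resolve_left hα)
  have hαw : α ≠ w := fun h ↦ hE.notMem (h ▸ E.start_mem_support)
  have hxy : x ≠ y := fun h ↦ hyW (h ▸ W.start_mem_support)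
  have hwy' : w ≠ y := fun h ↦ hyW (h ▸ W.end_mem_support)
  set A := Q₁.takeUntil α hα
  have hA : A.IsPath := hQ₁.takeUntil hα
  have hAQ₁ : A.support <+: Q₁.support := Q₁.support_takeUntil_prefix_support hα
  have hwA : w ∉ A.support := Walk.endpoint_notMem_support_takeUntil hQ₁ hα hαw.symm
  have hyQ₂ : y ∉ Q₂.support := by
    intro hy
    by_cases hyα : y = α
    · subst hyα
      exact (hQ y hα hy).1.elim (fun h ↦ hxy h.symm) (fun h ↦ hwy' h.symm)
    · exact (hE.notMem_of_ne_start y E.end_mem_support hyα).2 hy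
  have hP₁ : (A.append E).IsPath := hA.append_of_inter hE.isPath fun v hvA hvE ↦
    by_contra fun hvα ↦ (hE.notMem_of_ne_start v hvE hvα).1 (hAQ₁.subset hvA)
  have hP₂ : (Q₂.concat hwy).IsPath := hQ₂.concat hyQ₂ hwy
  refine ⟨A.append E, Q₂.concat hwy, hP₁, hP₂, ?_, ?_,
    (hE.aligned_takeUntil_append hQ₁ hal₁ hα).concat_left hP₁ hyW hwy,
    (hal₂.concat_right hyW hwy).concat_left hP₂ hyW hwy⟩
  · intro h
    have hw : w ∈ (A.append E).support := h ▸ by simp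
    exact (Walk.mem_support_append_iff _ _).1 hw |>.elim hwA hE.notMem
  · intro v hv₁ hv₂
    rw [Walk.support_concat, List.mem_append, List.mem_singleton] at hv₂
    rcases hv₂ with hv₂ | rfl
    · suffices v = x from ⟨.inl this, .inl this⟩
      rcases (Walk.mem_support_append_iff _ _).1 hv₁ with hvA | hvE
      · exact (hQ v (hAQ₁.subset hvA) hv₂).1.resolve_right fun h ↦ hwA (h ▸ hvA)
      · by_cases hvα : v = α
        · exact (hQ v (hvα ▸ hα) hv₂).1.resolve_right (hvα ▸ hαw)
        · exact absurd hv₂ (hE.notMem_of_ne_start v hvE hvα).2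
    · exact ⟨.inr rfl, .inr rfl⟩

section Detour

variable {x w t y : V} {W Q₁ Q₂ : G.Walk x w} {R : G.Walk t y}

theorem isDetour_of_start_mem (hR : R.IsPath) (hwR : w ∉ R.support)
    (hRt : ∀ v ∈ R.support, v ≠ t → v ∉ Q₁.support ∧ v ∉ Q₂.support ∧ v ∉ W.support)
    (htQ : t ∈ Q₁.support ∨ t ∈ Q₂.support) : IsDetour W Q₁ Q₂ R := by
  have hRW (v : V) (hv : v ∈ R.support) (hvW : v ∈ W.support) : v = t :=
    by_contra fun hvt ↦ (hRt v hv hvt).2.2 hvW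
  exact ⟨hR, htQ, fun v hv hvt ↦ ⟨(hRt v hv hvt).1, (hRt v hv hvt).2.1⟩, hwR,
    List.aligned_of_forall_mem_eq fun u hu hu' ↦ hRW u hu' hu, fun v hv hvW ↦ hRW v hv hvW ▸ hvW⟩

theorem exists_isDetour_of_start_mem_walk (hW : W.IsPath) (hR : R.IsPath) (hwR : w ∉ R.support)
    (hRt : ∀ v ∈ R.support, v ≠ t → v ∉ Q₁.support ∧ v ∉ Q₂.support ∧ v ∉ W.support)
    (htQ : t ∉ Q₁.support ∧ t ∉ Q₂.support) (htW : t ∈ W.support) :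
    ∃ (α : V) (E : G.Walk α y), IsDetour W Q₁ Q₂ E := by
  have hRW (v : V) (hv : v ∈ R.support) (hvW : v ∈ W.support) : v = t :=
    by_contra fun hvt ↦ (hRt v hv hvt).2.2 hvW
  obtain ⟨α, B, hαQ, hBQ, hBT⟩ := Walk.exists_suffix_last_mem
    {v | v ∈ Q₁.support ∨ v ∈ Q₂.support} (W.takeUntil t htW)
    ⟨x, Walk.start_mem_support _, .inl Q₁.start_mem_support⟩
  have hBW : B.support <:+: W.support :=
    hBT.isInfix.trans (W.support_takeUntil_prefix_support htW).isInfix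
  have hB : B.IsPath := Walk.isPath_def _ |>.2 (hW.support_nodup.sublist hBW.sublist)
  have hwB : w ∉ B.support := fun h ↦ Walk.endpoint_notMem_support_takeUntil hW htW
    (fun hwt ↦ hwR (hwt ▸ R.start_mem_support)) (hBT.subset h)
  have halB : W.support.Aligned B.support := List.aligned_of_infix hW.support_nodup hBW
  refine ⟨α, B.append R, hB.append_of_inter hR fun v hvB hvR ↦ hRW v hvR (hBW.subset hvB), hαQ,
    ?_, ?_, ?_, fun _ _ _ ↦ hBW.subset B.start_mem_support⟩
  · intro v hv hvα
    rcases (Walk.mem_support_append_iff _ _).1 hv with hvB | hvR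
    · simpa only [Set.mem_ofPred_eq, not_or] using mt (hBQ v hvB) hvα
    · by_cases hvt : v = t
      · exact hvt ▸ htQ
      · exact ⟨(hRt v hvR hvt).1, (hRt v hvR hvt).2.1⟩
  · exact fun h ↦ ((Walk.mem_support_append_iff _ _).1 h).elim hwB hwR
  · rw [Walk.support_append]
    refine halB.append (List.aligned_of_forall_mem_eq fun u hu hu' ↦
      hRW u (List.mem_of_mem_tail hu') hu) fun u hu v hv huW hvW ↦ ?_
    rw [hRW v (List.mem_of_mem_tail hv) hvW]
    exact halB.idxOf_le_idxOf huW htW hu B.end_mem_support (hB.idxOf_le_idxOf_end hu)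

end Detour

theorem exists_isDetour {x w y : V} (hcut : ((⊤ : G.Subgraph).deleteVerts {w}).coe.Connected)
    {W : G.Walk x w} (hW : W.IsPath) (hxw : x ≠ w) (hyW : y ∉ W.support) (Q₁ Q₂ : G.Walk x w) :
    ∃ (α : V) (E : G.Walk α y), IsDetour W Q₁ Q₂ E := by
  have hyw : y ≠ w := fun h ↦ hyW (h ▸ W.end_mem_support)
  obtain ⟨R₀, hR₀, hwR₀⟩ := exists_isPath_notMem_support hcut hxw hyw
  obtain ⟨t, R, htS, hRS, hRR₀⟩ := Walk.exists_suffix_last_mem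
    {v | v ∈ Q₁.support ∨ v ∈ Q₂.support ∨ v ∈ W.support} R₀
    ⟨x, R₀.start_mem_support, .inl Q₁.start_mem_support⟩
  have hR : R.IsPath := Walk.isPath_def _ |>.2 (hR₀.support_nodup.sublist hRR₀.sublist)
  have hwR : w ∉ R.support := fun h ↦ hwR₀ (hRR₀.subset h)
  have hRt (v : V) (hv : v ∈ R.support) (hvt : v ≠ t) :
      v ∉ Q₁.support ∧ v ∉ Q₂.support ∧ v ∉ W.support := by
    simpa only [Set.mem_ofPred_eq, not_or] using mt (hRS v hv) hvt
  by_cases htQ : t ∈ Q₁.support ∨ t ∈ Q₂.support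
  · exact ⟨t, R, isDetour_of_start_mem hR hwR hRt htQ⟩
  · rw [not_or] at htQ
    exact exists_isDetour_of_start_mem_walk hW hR hwR hRt htQ
      ((htS.resolve_left htQ.1).resolve_left htQ.2)

end AlignedPaths

/-- Dirac's Lemma 2: in a 2-connected graph, for any `x,y`-path `W` there are two
internally disjoint `x,y`-paths, each aligned with `W`. -/
theorem stmt_2 {V : Type*} [Fintype V] [DecidableEq V] {G : SimpleGraph V}
    (hG : TwoConnected G) {x y : V} (hxy : x ≠ y) (W : G.Walk x y) (hW : W.IsPath) :
    ∃ (P1 P2 : G.Walk x y), P1.IsPath ∧ P2.IsPath ∧ P1 ≠ P2 ∧ IntDisjoint P1 P2 ∧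
      Aligned W P1 ∧ Aligned W P2 := by
  obtain ⟨hcard, -, hcut⟩ := hG
  induction W using Walk.concatRec with
  | Hnil => exact absurd rfl hxy
  | @Hconcat x w y W hwy ih =>
    obtain ⟨hW, hyW⟩ := (Walk.concat_isPath_iff hwy).1 hW
    by_cases hxw : x = w
    · subst hxw
      rw [Walk.eq_nil_iff_nil.2 (Walk.isPath_iff_nil.1 hW)]
      exact hasAlignedPathPair_concat_nil hcard hcut hwy
    · obtain ⟨Q₁, Q₂, hQ₁, hQ₂, -, hQ, hal₁, hal₂⟩ := ih hxw hW
      obtain ⟨α, E, hE⟩ := exists_isDetour (hcut w) hW hxw hyW Q₁ Q₂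
      exact hE.hasAlignedPathPair hyW hwy hQ₁ hQ₂ hQ hal₁ hal₂
end

section
/- Let G be a 2-connected graph, let x, y be distinct vertices, let W be an x,y-path, and suppose x is adjacent to a vertex z of W. Then G contains two internally disjoint x,y-paths, each aligned with W, one of which passes through z. -/
/-!
Dirac's induction on the length of `W`. Write `W = W₀ + wy` and let `Q₁, Q₂` be internally
disjoint `x,w`-paths aligned with `W₀`. If `y` lies on `Q₁`, keep `Q₁[x,y]` and `Q₂ + wy`.
Otherwise 2-connectivity gives a `y,x`-path `R` avoiding `w`; let `u` be its first vertex on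
`Q₁ ∪ Q₂ ∪ W₀`. If `u` lies on `Q₁`, the new pair is `Q₁[x,u] + R[u,y]` and `Q₂ + wy`. If `u`
lies only on `W₀`, let `s` be the last vertex of `W₀[x,u]` on `Q₁ ∪ Q₂`, say on `Q₁`, and use
`Q₁[x,s] + W₀[s,u] + R[u,y]` instead. To pass through a neighbour `z` of `x` on `W`, follow `W`
from `z` to its first vertex `u` on `P₁ ∪ P₂`, say on `P₁`, and replace `P₁` by
`xz + W[z,u] + P₁[u,y]`.

Alignment is tracked in the form "the vertices of the path that lie on `W` form a subsequence
of `W`" (`List.Follows`), which survives these splicings.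
-/

open SimpleGraph

namespace List

variable {α : Type*}

theorem Sublist.of_append_cons_of_nodup {l₁ l₂ L₁ L₂ : List α} {a : α}
    (h : l₁ ++ a :: l₂ <+ L₁ ++ a :: L₂) (hL : (L₁ ++ a :: L₂).Nodup) :
    l₁ <+ L₁ ∧ l₂ <+ L₂ := by
  induction L₁ generalizing l₁ with
  | nil =>
    have ha : a ∉ L₂ := (nodup_cons.1 hL).1
    cases l₁ with
    | nil => exact ⟨nil_sublist _, cons_sublist_cons.1 h⟩
    | cons b l₁ =>
      exact absurd (h.of_cons_cons.subset (by simp)) ha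
  | cons c L₁ ih =>
    have hc : c ∉ L₁ ++ a :: L₂ := (nodup_cons.1 hL).1
    rcases sublist_cons_iff.1 h with h | ⟨r, hr, hrL⟩
    · exact (ih h (nodup_cons.1 hL).2).imp_left (·.cons c)
    · cases l₁ with
      | nil => exact absurd (by simp [(cons_eq_cons.1 hr).1]) hc
      | cons b l₁ =>
        obtain ⟨rfl, rfl⟩ := cons_eq_cons.1 hr
        exact (ih hrL (nodup_cons.1 hL).2).imp_left (·.cons_cons b)

variable [DecidableEq α]

def Follows (l L : List α) : Prop := l.filter (· ∈ L) <+ L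

theorem pair_sublist_of_idxOf_lt {l : List α} {a b : α} (hb : b ∈ l)
    (h : l.idxOf a < l.idxOf b) : [a, b] <+ l := by
  induction l with
  | nil => simp at hb
  | cons c l ih =>
    by_cases hca : c = a
    · subst hca
      have hba : b ≠ c := by rintro rfl; simp at h
      simpa [hba] using hb
    · have hcb : c ≠ b := by rintro rfl; simp at h
      rw [idxOf_cons_ne _ hca, idxOf_cons_ne _ hcb] at h
      exact (ih ((mem_cons.1 hb).resolve_left hcb.symm) (by omega)).cons c

theorem Nodup.idxOf_lt_of_pair_sublist {l : List α} {a b : α} (hl : l.Nodup)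
    (h : [a, b] <+ l) : l.idxOf a < l.idxOf b := by
  induction l with
  | nil => simp at h
  | cons c l ih =>
    rw [nodup_cons] at hl
    rcases sublist_cons_iff.1 h with h | ⟨r, hr, hrl⟩
    · have hca : c ≠ a := fun hc => hl.1 (hc ▸ h.subset (by simp))
      have hcb : c ≠ b := fun hc => hl.1 (hc ▸ h.subset (by simp))
      rw [idxOf_cons_ne _ hca, idxOf_cons_ne _ hcb]
      exact Nat.succ_lt_succ (ih hl.2 h)
    · obtain ⟨rfl, rfl⟩ := cons_eq_cons.1 hr
      have hab : a ≠ b := fun hab => hl.1 (hab ▸ hrl.subset (by simp))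
      rw [idxOf_cons_self, idxOf_cons_ne _ hab]
      exact Nat.succ_pos _

theorem follows_self (L : List α) : L.Follows L := by
  simp [Follows]

theorem Follows.sublist {l l' L : List α} (h : l.Follows L) (hl : l' <+ l) : l'.Follows L :=
  (hl.filter _).trans h

theorem follows_singleton_of_nodup {l : List α} (hl : l.Nodup) (a : α) : l.Follows [a] := by
  have : l.filter (· ∈ [a]) = replicate (l.count a) a := by simp [filter_eq]
  rw [Follows, this, ← replicate_one]
  exact (replicate_sublist_replicate a).2 (nodup_iff_count_le_one.1 hl a)

theorem Follows.append {l₁ l₂ L₁ L₂ : List α} (h₁ : l₁.Follows L₁) (h₂ : l₂.Follows L₂)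
    (h₁₂ : ∀ v ∈ l₁, v ∉ L₂) (h₂₁ : ∀ v ∈ l₂, v ∉ L₁) : (l₁ ++ l₂).Follows (L₁ ++ L₂) := by
  have e₁ : l₁.filter (· ∈ L₁ ++ L₂) = l₁.filter (· ∈ L₁) :=
    filter_congr fun v hv => by simp [h₁₂ v hv]
  have e₂ : l₂.filter (· ∈ L₁ ++ L₂) = l₂.filter (· ∈ L₂) :=
    filter_congr fun v hv => by simp [h₂₁ v hv]
  rw [Follows, filter_append, e₁, e₂]
  exact Sublist.append h₁ h₂

theorem Follows.split {l₁ l₂ L₁ L₂ : List α} {a : α}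
    (h : (l₁ ++ a :: l₂).Follows (L₁ ++ a :: L₂)) (hL : (L₁ ++ a :: L₂).Nodup) :
    l₁.filter (· ∈ L₁ ++ a :: L₂) <+ L₁ ∧ l₂.filter (· ∈ L₁ ++ a :: L₂) <+ L₂ := by
  unfold Follows at h
  rw [filter_append, filter_cons_of_pos (by simp)] at h
  exact h.of_append_cons_of_nodup hL

theorem Follows.splice_right {l₁ l₂ L₁ L₂ m : List α} {a : α}
    (h : (l₁ ++ a :: l₂).Follows (L₁ ++ a :: L₂)) (hL : (L₁ ++ a :: L₂).Nodup) (hm : m <+ L₂) :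
    (l₁ ++ a :: m).Follows (L₁ ++ a :: L₂) := by
  have hm' : m.filter (· ∈ L₁ ++ a :: L₂) = m := filter_eq_self.2 fun v hv => by simp [hm.subset hv]
  rw [Follows, filter_append, filter_cons_of_pos (by simp), hm']
  exact (h.split hL).1.append (hm.cons_cons a)

theorem Follows.splice_left {l₁ l₂ L₁ L₂ m : List α} {a : α}
    (h : (l₁ ++ a :: l₂).Follows (L₁ ++ a :: L₂)) (hL : (L₁ ++ a :: L₂).Nodup) (hm : m <+ L₁) :
    (m ++ a :: l₂).Follows (L₁ ++ a :: L₂) := by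
  have hm' : m.filter (· ∈ L₁ ++ a :: L₂) = m := filter_eq_self.2 fun v hv => by simp [hm.subset hv]
  rw [Follows, filter_append, filter_cons_of_pos (by simp), hm']
  exact hm.append ((h.split hL).2.cons_cons a)

end List

namespace SimpleGraph.Walk

variable {V : Type*} {G : SimpleGraph V}

theorem support_append_eq_dropLast_cons {a b c : V} (p : G.Walk a b) (q : G.Walk b c) :
    (p.append q).support = p.support.dropLast ++ b :: q.support.tail := by
  conv_lhs => rw [support_append_eq_support_dropLast_append, ← cons_tail_support q]

theorem isPath_append_iff {a b c : V} {p : G.Walk a b} {q : G.Walk b c} :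
    (p.append q).IsPath ↔ p.IsPath ∧ q.IsPath ∧ ∀ v ∈ p.support, v ∈ q.support → v = b := by
  obtain ⟨d, hd⟩ : ∃ d, p.support = d ++ [b] := ⟨_, (dropLast_support_concat p).symm⟩
  obtain ⟨t, ht⟩ : ∃ t, q.support = b :: t := ⟨_, (cons_tail_support q).symm⟩
  rw [isPath_def, isPath_def, isPath_def, support_append_eq_support_dropLast_append, hd, ht,
    List.dropLast_concat]
  simp only [List.nodup_append, List.nodup_cons, List.mem_append, List.mem_cons]
  grind

theorem exists_append_first_mem {a b : V} (p : G.Walk a b) {S : Set V} (hb : b ∈ S) :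
    ∃ u ∈ S, ∃ (q : G.Walk a u) (r : G.Walk u b), p = q.append r ∧
      ∀ v ∈ q.support, v ∈ S → v = u := by
  classical
  induction p with
  | nil => exact ⟨_, hb, nil, nil, rfl, by simp⟩
  | @cons a _ _ h p ih =>
    by_cases ha : a ∈ S
    · exact ⟨a, ha, nil, cons h p, rfl, by simp⟩
    · obtain ⟨u, hu, q, r, rfl, hq⟩ := ih hb
      refine ⟨u, hu, cons h q, r, rfl, ?_⟩
      rintro v hv hvS
      rcases List.mem_cons.1 (support_cons h q ▸ hv) with rfl | hv
      · exact absurd hvS ha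
      · exact hq v hv hvS

theorem exists_append_last_mem {a b : V} (p : G.Walk a b) {S : Set V} (ha : a ∈ S) :
    ∃ u ∈ S, ∃ (q : G.Walk a u) (r : G.Walk u b), p = q.append r ∧
      ∀ v ∈ r.support, v ∈ S → v = u := by
  obtain ⟨u, hu, q, r, hp, hq⟩ := p.reverse.exists_append_first_mem ha
  refine ⟨u, hu, r.reverse, q.reverse, ?_, by simpa using hq⟩
  rw [← reverse_append, ← hp, reverse_reverse]

variable [DecidableEq V]

theorem follows_splice_right {x s u w b : V} {P₁ : G.Walk x s} {P₂ : G.Walk s b}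
    {A : G.Walk x s} {M : G.Walk s u} {B : G.Walk u w} (hW : (A.append (M.append B)).IsPath)
    (h : (P₁.append P₂).support.Follows (A.append (M.append B)).support) :
    (P₁.append M).support.Follows (A.append (M.append B)).support := by
  have hWs : (A.append (M.append B)).support =
      A.support.dropLast ++ s :: (M.support.tail ++ B.support.tail) := by
    rw [support_append_eq_dropLast_cons, tail_support_append]
  rw [hWs, support_append_eq_dropLast_cons] at h
  rw [hWs, support_append_eq_dropLast_cons]
  exact h.splice_right (hWs ▸ hW.support_nodup) (List.sublist_append_left _ _)

theorem follows_splice_left {x z u y b : V} {P₁ : G.Walk x u} {P₂ : G.Walk u b}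
    {A : G.Walk x z} {M : G.Walk z u} {B : G.Walk u y} (hxz : G.Adj x z)
    (hW : ((A.append M).append B).IsPath)
    (h : (P₁.append P₂).support.Follows ((A.append M).append B).support) :
    (cons hxz (M.append P₂)).support.Follows ((A.append M).append B).support := by
  have hWs : ((A.append M).append B).support =
      (A.support.dropLast ++ M.support.dropLast) ++ u :: B.support.tail := by
    rw [support_append_eq_dropLast_cons, support_append_eq_support_dropLast_append,
      List.dropLast_append_of_ne_nil M.support_ne_nil]
  have hN : (cons hxz (M.append P₂)).support =
      (x :: M.support.dropLast) ++ u :: P₂.support.tail := by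
    rw [support_cons, support_append_eq_dropLast_cons, List.cons_append]
  have hxA : x ∈ A.support.dropLast := by
    have hx := A.start_mem_support
    rw [← dropLast_support_concat A, List.mem_append, List.mem_singleton] at hx
    exact hx.resolve_right hxz.ne
  rw [hWs, support_append_eq_dropLast_cons] at h
  rw [hWs, hN]
  exact h.splice_left (hWs ▸ hW.support_nodup)
    ((List.singleton_sublist.2 hxA).append (List.Sublist.refl _))

end SimpleGraph.Walk

section TwoConnected

variable {V : Type*} [Fintype V] {G : SimpleGraph V}

theorem TwoConnected.exists_isPath_avoiding (hG : TwoConnected G) {t a b : V} (ha : a ≠ t)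
    (hb : b ≠ t) : ∃ p : G.Walk a b, p.IsPath ∧ t ∉ p.support := by
  classical
  obtain ⟨q⟩ := hG.2.2 t ⟨a, by simp [ha]⟩ ⟨b, by simp [hb]⟩
  let q' : G.Walk a b := q.map (Subgraph.hom _)
  refine ⟨q'.bypass, q'.bypass_isPath, fun ht => ?_⟩
  have ht' := q'.support_bypass_subset_support ht
  rw [show q'.support = _ from Walk.support_map _ _] at ht'
  obtain ⟨⟨v, hv⟩, -, hvt⟩ := List.mem_map.1 ht'
  simp only [Subgraph.deleteVerts_verts, Subgraph.verts_top, Set.mem_sdiff,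
    Set.mem_singleton_iff] at hv
  exact hv.2 hvt

theorem TwoConnected.exists_adj_ne (hG : TwoConnected G) {a t : V} (ha : a ≠ t) :
    ∃ b, G.Adj a b ∧ b ≠ t := by
  classical
  obtain ⟨c, hca, hct⟩ : ∃ c, c ≠ a ∧ c ≠ t := by
    by_contra! h
    have hsub : (Finset.univ : Finset V) ⊆ {a, t} := fun v _ => by
      by_cases hv : v = a
      · simp [hv]
      · simp [h v hv]
    have := (Finset.card_le_card hsub).trans Finset.card_le_two
    have := hG.1
    simp only [Finset.card_univ] at *
    omega
  obtain ⟨p, -, htp⟩ := hG.exists_isPath_avoiding ha hct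
  cases p with
  | nil => exact absurd rfl hca
  | cons h p => exact ⟨_, h, fun hb => htp (by simp [← hb])⟩

end TwoConnected

section AlignedPair

open Walk List

variable {V : Type*} [DecidableEq V] {G : SimpleGraph V}

structure IsAlignedPair {x y : V} (W P Q : G.Walk x y) : Prop where
  isPath_left : P.IsPath
  isPath_right : Q.IsPath
  ne : P ≠ Q
  eq_of_mem_of_mem : ∀ v ∈ P.support, v ∈ Q.support → v = x ∨ v = y
  follows_left : P.support.Follows W.support
  follows_right : Q.support.Follows W.support

namespace IsAlignedPair

variable {x y : V} {W P Q : G.Walk x y}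

theorem symm (h : IsAlignedPair W P Q) : IsAlignedPair W Q P :=
  ⟨h.isPath_right, h.isPath_left, h.ne.symm, fun v hQ hP => h.eq_of_mem_of_mem v hP hQ,
    h.follows_right, h.follows_left⟩

theorem intDisjoint (h : IsAlignedPair W P Q) : IntDisjoint P Q := fun v hP hQ =>
  ⟨h.eq_of_mem_of_mem v hP hQ, h.eq_of_mem_of_mem v hP hQ⟩

end IsAlignedPair

theorem TwoConnected.exists_isAlignedPair_cons_nil [Fintype V] (hG : TwoConnected G) {x y : V}
    (e : G.Adj x y) : ∃ P Q, IsAlignedPair (cons e nil) P Q := by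
  obtain ⟨b, hxb, hby⟩ := hG.exists_adj_ne e.ne
  obtain ⟨R, hR, hxR⟩ := hG.exists_isPath_avoiding hxb.ne' e.ne.symm
  have hbP : b ∉ (cons e nil).support := by simp [hxb.ne', hby]
  refine ⟨cons e nil, cons hxb R, ⟨by simpa using e.ne, hR.cons hxR, fun h => hbP ?_,
    fun v hv _ => by simpa using hv, follows_self _, ?_⟩⟩
  · simp [h]
  · have := (follows_self [x]).append (follows_singleton_of_nodup hR.support_nodup y)
      (by simpa using e.ne) (fun v hv hvx => hxR (by simp_all))
    simpa using this

theorem isAlignedPair_concat {x w y : V} {W Q : G.Walk x w} (hQ : Q.IsPath)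
    (hQW : Q.support.Follows W.support) (e : G.Adj w y) (hyW : y ∉ W.support)
    (hyQ : y ∉ Q.support) {T : G.Walk x y} (hT : T.IsPath) (hwT : w ∉ T.support)
    (hTQ : ∀ v ∈ T.support, v ∈ Q.support → v = x) (hTW : T.support.Follows (W.support ++ [y])) :
    IsAlignedPair (W.concat e) T (Q.concat e) := by
  have hsupp (p : G.Walk x w) : (p.concat e).support = p.support ++ [y] := by
    simp [support_concat]
  refine ⟨hT, hQ.concat hyQ e, fun h => hwT (h ▸ by simp [hsupp]), fun v hvT hvQ => ?_,
    by rwa [hsupp], ?_⟩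
  · rw [hsupp, mem_append, mem_singleton] at hvQ
    exact hvQ.imp (hTQ v hvT) id
  · rw [hsupp, hsupp]
    exact hQW.append (follows_self [y]) (fun v hv hvy => hyQ (by simp_all)) (by simpa using hyW)

theorem IsAlignedPair.exists_concat_of_mem_left {x w y : V} {W Q₁ Q₂ : G.Walk x w}
    (h : IsAlignedPair W Q₁ Q₂) (e : G.Adj w y) (hxy : x ≠ y) (hyW : y ∉ W.support)
    (hy : y ∈ Q₁.support) : ∃ P₁ P₂, IsAlignedPair (W.concat e) P₁ P₂ := by
  obtain ⟨T, Q₁', rfl⟩ := mem_support_iff_exists_append.1 hy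
  obtain ⟨hT, -, hTQ₁'⟩ := isPath_append_iff.1 h.isPath_left
  have hwT : w ∉ T.support := fun hw =>
    hyW (hTQ₁' w hw Q₁'.end_mem_support ▸ W.end_mem_support)
  have hTQ₂ (v) (hvT : v ∈ T.support) (hvQ₂ : v ∈ Q₂.support) : v = x :=
    (h.eq_of_mem_of_mem v (by simp [mem_support_append_iff, hvT]) hvQ₂).resolve_right
      (by rintro rfl; exact hwT hvT)
  have hyQ₂ : y ∉ Q₂.support := fun hyQ₂ => hxy (hTQ₂ y T.end_mem_support hyQ₂).symm
  refine ⟨_, _, isAlignedPair_concat h.isPath_right h.follows_right e hyW hyQ₂ hT hwT hTQ₂ ?_⟩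
  have hnd := hT.support_nodup
  rw [← dropLast_support_concat T] at hnd ⊢
  have hTQ₁ : T.support.dropLast <+ (T.append Q₁').support := by
    rw [support_append]
    exact (dropLast_sublist _).trans (sublist_append_left _ _)
  exact (h.follows_left.sublist hTQ₁).append (follows_self [y])
    (fun v hv hvy => (nodup_append.1 hnd).2.2 v hv y (mem_singleton_self y) (by simpa using hvy))
    (by simpa using hyW)

theorem isAlignedPair_concat_append_reverse {x w y u : V} {W Q : G.Walk x w} (hQ : Q.IsPath)
    (hQW : Q.support.Follows W.support) (e : G.Adj w y) (hyW : y ∉ W.support)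
    {K : G.Walk x u} (hK : K.IsPath) (hwK : w ∉ K.support) (hyK : y ∉ K.support)
    (hKQ : ∀ v ∈ K.support, v ∈ Q.support → v = x) (hKW : K.support.Follows W.support)
    {R : G.Walk y u} (hR : R.IsPath) (hwR : w ∉ R.support)
    (hRK : ∀ v ∈ R.support, v ∈ K.support → v = u) (hRQ : ∀ v ∈ R.support, v ∈ Q.support → v = u)
    (hRW : ∀ v ∈ R.support, v ∈ W.support → v = u) :
    IsAlignedPair (W.concat e) (K.append R.reverse) (Q.concat e) := by
  have hyQ : y ∉ Q.support := fun hyQ =>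
    hyK (hRQ y R.start_mem_support hyQ ▸ K.end_mem_support)
  refine isAlignedPair_concat hQ hQW e hyW hyQ
    (isPath_append_iff.2 ⟨hK, hR.reverse, fun v hvK hvR => hRK v (by simpa using hvR) hvK⟩)
    (by simp [mem_support_append_iff, hwK, hwR]) (fun v hv hvQ => ?_) ?_
  · rcases (mem_support_append_iff _ _).1 hv with hvK | hvR
    · exact hKQ v hvK hvQ
    · obtain rfl := hRQ v (by simpa using hvR) hvQ
      exact hKQ v K.end_mem_support hvQ
  · have hnd := hR.reverse.support_nodup
    rw [← cons_tail_support, nodup_cons] at hnd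
    have hRt (v) (hv : v ∈ R.reverse.support.tail) : v ∈ R.support := by
      simpa using mem_of_mem_tail hv
    rw [support_append]
    exact hKW.append (follows_singleton_of_nodup hnd.2 y) (fun v hv hvy => hyK (by simp_all))
      (fun v hv hvW => hnd.1 (hRW v (hRt v hv) hvW ▸ hv))

theorem IsAlignedPair.exists_concat_of_hit_left {x w y u : V} {W Q₁ Q₂ : G.Walk x w}
    (h : IsAlignedPair W Q₁ Q₂) (e : G.Adj w y) (hyW : y ∉ W.support) (hyQ₁ : y ∉ Q₁.support)
    {R : G.Walk y u} (hR : R.IsPath) (hwR : w ∉ R.support)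
    (hRQ₁ : ∀ v ∈ R.support, v ∈ Q₁.support → v = u)
    (hRQ₂ : ∀ v ∈ R.support, v ∈ Q₂.support → v = u)
    (hRW : ∀ v ∈ R.support, v ∈ W.support → v = u) (hu : u ∈ Q₁.support) :
    ∃ P₁ P₂, IsAlignedPair (W.concat e) P₁ P₂ := by
  obtain ⟨K, Q₁', rfl⟩ := mem_support_iff_exists_append.1 hu
  obtain ⟨hK, -, hKQ₁'⟩ := isPath_append_iff.1 h.isPath_left
  have hKQ₁ (v) (hv : v ∈ K.support) : v ∈ (K.append Q₁').support :=
    (mem_support_append_iff _ _).2 (Or.inl hv)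
  have hwK : w ∉ K.support := fun hw =>
    hwR (hKQ₁' w hw Q₁'.end_mem_support ▸ R.end_mem_support)
  exact ⟨_, _, isAlignedPair_concat_append_reverse h.isPath_right h.follows_right e hyW hK hwK
    (fun hy => hyQ₁ (hKQ₁ y hy))
    (fun v hvK hvQ₂ => (h.eq_of_mem_of_mem v (hKQ₁ v hvK) hvQ₂).resolve_right
      (by rintro rfl; exact hwK hvK))
    (h.follows_left.sublist (by simp [support_append])) hR hwR
    (fun v hvR hvK => hRQ₁ v hvR (hKQ₁ v hvK)) hRQ₂ hRW⟩

theorem IsAlignedPair.exists_concat_of_hit_base {x w y s u : V} {W Q₁ Q₂ : G.Walk x w}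
    (h : IsAlignedPair W Q₁ Q₂) (hW : W.IsPath) (e : G.Adj w y) (hyW : y ∉ W.support)
    (hyQ₁ : y ∉ Q₁.support) {A : G.Walk x s} {M : G.Walk s u} {B : G.Walk u w}
    (hWeq : W = A.append (M.append B)) (hs : s ∈ Q₁.support)
    (hMQ₁ : ∀ v ∈ M.support, v ∈ Q₁.support → v = s)
    (hMQ₂ : ∀ v ∈ M.support, v ∈ Q₂.support → v = s)
    {R : G.Walk y u} (hR : R.IsPath) (hwR : w ∉ R.support)
    (hRQ₁ : ∀ v ∈ R.support, v ∈ Q₁.support → v = u)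
    (hRQ₂ : ∀ v ∈ R.support, v ∈ Q₂.support → v = u)
    (hRW : ∀ v ∈ R.support, v ∈ W.support → v = u) :
    ∃ P₁ P₂, IsAlignedPair (W.concat e) P₁ P₂ := by
  subst hWeq
  obtain ⟨Q₁a, Q₁b, rfl⟩ := mem_support_iff_exists_append.1 hs
  obtain ⟨-, hMB, -⟩ := isPath_append_iff.1 hW
  obtain ⟨hM, -, hMB'⟩ := isPath_append_iff.1 hMB
  obtain ⟨hQ₁a, -, hQ₁ab⟩ := isPath_append_iff.1 h.isPath_left
  have hMW (v) (hv : v ∈ M.support) : v ∈ (A.append (M.append B)).support := by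
    simp [mem_support_append_iff, hv]
  have hQ₁aQ₁ (v) (hv : v ∈ Q₁a.support) : v ∈ (Q₁a.append Q₁b).support := by
    simp [mem_support_append_iff, hv]
  have hwM : w ∉ M.support := fun hw =>
    hwR (hMB' w hw B.end_mem_support ▸ R.end_mem_support)
  have hwQ₁a : w ∉ Q₁a.support := fun hw =>
    hwM (hQ₁ab w hw Q₁b.end_mem_support ▸ M.start_mem_support)
  have hwK : w ∉ (Q₁a.append M).support := by simp [mem_support_append_iff, hwM, hwQ₁a]
  have hKQ₂ (v) (hv : v ∈ (Q₁a.append M).support) (hvQ₂ : v ∈ Q₂.support) : v = x := by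
    have hvQ₁ : v ∈ (Q₁a.append Q₁b).support := by
      rcases (mem_support_append_iff _ _).1 hv with hv | hv
      · exact hQ₁aQ₁ v hv
      · exact hMQ₂ v hv hvQ₂ ▸ hs
    exact (h.eq_of_mem_of_mem v hvQ₁ hvQ₂).resolve_right (by rintro rfl; exact hwK hv)
  refine ⟨_, _, isAlignedPair_concat_append_reverse h.isPath_right h.follows_right e hyW
    (isPath_append_iff.2 ⟨hQ₁a, hM, fun v hv hvM => hMQ₁ v hvM (hQ₁aQ₁ v hv)⟩) hwK ?_ hKQ₂
    (follows_splice_right hW h.follows_left)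
    hR hwR ?_ hRQ₂ hRW⟩
  · rw [mem_support_append_iff]
    exact fun hy => hy.elim (fun hy => hyQ₁ (hQ₁aQ₁ y hy)) (fun hy => hyW (hMW y hy))
  · intro v hvR hv
    rcases (mem_support_append_iff _ _).1 hv with hv | hv
    · exact hRQ₁ v hvR (hQ₁aQ₁ v hv)
    · exact hRW v hvR (hMW v hv)

theorem IsAlignedPair.exists_concat [Fintype V] (hG : TwoConnected G) {x w y : V}
    {W Q₁ Q₂ : G.Walk x w} (h : IsAlignedPair W Q₁ Q₂) (hW : W.IsPath) (e : G.Adj w y)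
    (hxw : x ≠ w) (hyW : y ∉ W.support) : ∃ P₁ P₂, IsAlignedPair (W.concat e) P₁ P₂ := by
  have hxy : x ≠ y := fun hxy => hyW (hxy ▸ W.start_mem_support)
  by_cases hy₁ : y ∈ Q₁.support
  · exact h.exists_concat_of_mem_left e hxy hyW hy₁
  by_cases hy₂ : y ∈ Q₂.support
  · exact h.symm.exists_concat_of_mem_left e hxy hyW hy₂
  have hyw : y ≠ w := fun hyw => hyW (hyw ▸ W.end_mem_support)
  obtain ⟨R₀, hR₀, hwR₀⟩ := hG.exists_isPath_avoiding hyw hxw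
  obtain ⟨u, hu, R, R', hR₀R, hRS⟩ := R₀.exists_append_first_mem
    (S := {v | v ∈ Q₁.support ∨ v ∈ Q₂.support ∨ v ∈ W.support}) (Or.inl Q₁.start_mem_support)
  rw [hR₀R] at hR₀ hwR₀
  have hR : R.IsPath := hR₀.of_append_left
  have hwR : w ∉ R.support := fun hw => hwR₀ ((mem_support_append_iff _ _).2 (Or.inl hw))
  have hRQ₁ (v) (hv : v ∈ R.support) (h₁ : v ∈ Q₁.support) : v = u := hRS v hv (Or.inl h₁)
  have hRQ₂ (v) (hv : v ∈ R.support) (h₂ : v ∈ Q₂.support) : v = u := hRS v hv (Or.inr (Or.inl h₂))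
  have hRW (v) (hv : v ∈ R.support) (hW : v ∈ W.support) : v = u := hRS v hv (Or.inr (Or.inr hW))
  rcases hu with hu₁ | hu₂ | huW
  · exact h.exists_concat_of_hit_left e hyW hy₁ hR hwR hRQ₁ hRQ₂ hRW hu₁
  · exact h.symm.exists_concat_of_hit_left e hyW hy₂ hR hwR hRQ₂ hRQ₁ hRW hu₂
  · obtain ⟨Wa, B, rfl⟩ := mem_support_iff_exists_append.1 huW
    obtain ⟨s, hs, A, M, rfl, hM⟩ := Wa.exists_append_last_mem
      (S := {v | v ∈ Q₁.support ∨ v ∈ Q₂.support}) (Or.inl Q₁.start_mem_support)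
    rcases hs with hs₁ | hs₂
    · exact h.exists_concat_of_hit_base hW e hyW hy₁ (Walk.append_assoc A M B).symm hs₁
        (fun v hv h₁ => hM v hv (Or.inl h₁)) (fun v hv h₂ => hM v hv (Or.inr h₂))
        hR hwR hRQ₁ hRQ₂ hRW
    · exact h.symm.exists_concat_of_hit_base hW e hyW hy₂ (Walk.append_assoc A M B).symm hs₂
        (fun v hv h₂ => hM v hv (Or.inr h₂)) (fun v hv h₁ => hM v hv (Or.inl h₁))
        hR hwR hRQ₂ hRQ₁ hRW

theorem TwoConnected.exists_isAlignedPair [Fintype V] (hG : TwoConnected G) {x y : V}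
    (W : G.Walk x y) (hW : W.IsPath) (hxy : x ≠ y) : ∃ P Q, IsAlignedPair W P Q := by
  induction W using Walk.concatRec with
  | Hnil => exact absurd rfl hxy
  | @Hconcat x w y W₀ e ih =>
    obtain ⟨hW₀, hyW₀⟩ := (concat_isPath_iff e).1 hW
    by_cases hxw : x = w
    · subst hxw
      obtain rfl := eq_nil_iff_nil.2 (isPath_iff_nil.1 hW₀)
      exact hG.exists_isAlignedPair_cons_nil e
    · obtain ⟨Q₁, Q₂, h⟩ := ih hW₀ hxw
      exact h.exists_concat hG hW₀ e hxw hyW₀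

theorem IsAlignedPair.exists_through_of_hit_left {x y z u : V} {W P₁ P₂ : G.Walk x y}
    (h : IsAlignedPair W P₁ P₂) (hW : W.IsPath) (hxz : G.Adj x z) (hz₁ : z ∉ P₁.support)
    {A : G.Walk x z} {M : G.Walk z u} {B : G.Walk u y} (hWeq : W = (A.append M).append B)
    (hu : u ∈ P₁.support) (hMP₁ : ∀ v ∈ M.support, v ∈ P₁.support → v = u)
    (hMP₂ : ∀ v ∈ M.support, v ∈ P₂.support → v = u) :
    ∃ N, IsAlignedPair W N P₂ ∧ z ∈ N.support := by
  subst hWeq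
  obtain ⟨P₁a, P₁b, rfl⟩ := mem_support_iff_exists_append.1 hu
  obtain ⟨hAM, -, -⟩ := isPath_append_iff.1 hW
  obtain ⟨-, hM, hAM'⟩ := isPath_append_iff.1 hAM
  obtain ⟨-, hP₁b, hP₁ab⟩ := isPath_append_iff.1 h.isPath_left
  have hP₁bP₁ (v) (hv : v ∈ P₁b.support) : v ∈ (P₁a.append P₁b).support := by
    simp [mem_support_append_iff, hv]
  have hxM : x ∉ M.support := fun hx => hxz.ne (hAM' x A.start_mem_support hx)
  have hxP₁b : x ∉ P₁b.support := fun hx =>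
    hxM (hP₁ab x P₁a.start_mem_support hx ▸ M.end_mem_support)
  have hzN : z ∈ (cons hxz (M.append P₁b)).support := by simp
  refine ⟨cons hxz (M.append P₁b), ⟨?_, h.isPath_right, fun hN => ?_, fun v hv hvP₂ => ?_, ?_,
    h.follows_right⟩, hzN⟩
  · refine (isPath_append_iff.2 ⟨hM, hP₁b, fun v hv hvb => hMP₁ v hv (hP₁bP₁ v hvb)⟩).cons ?_
    simp [mem_support_append_iff, hxM, hxP₁b]
  · exact hz₁ (hMP₂ z M.start_mem_support (hN ▸ hzN) ▸ hu)
  · simp only [support_cons, mem_cons, mem_support_append_iff] at hv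
    rcases hv with rfl | hvM | hvb
    · exact Or.inl rfl
    · obtain rfl := hMP₂ v hvM hvP₂
      exact h.eq_of_mem_of_mem v hu hvP₂
    · exact h.eq_of_mem_of_mem v (hP₁bP₁ v hvb) hvP₂
  · exact follows_splice_left hxz hW h.follows_left

theorem IsAlignedPair.exists_mem_left {x y z : V} {W P₁ P₂ : G.Walk x y}
    (h : IsAlignedPair W P₁ P₂) (hW : W.IsPath) (hxz : G.Adj x z) (hz : z ∈ W.support) :
    ∃ N₁ N₂, IsAlignedPair W N₁ N₂ ∧ z ∈ N₁.support := by
  by_cases hz₁ : z ∈ P₁.support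
  · exact ⟨P₁, P₂, h, hz₁⟩
  by_cases hz₂ : z ∈ P₂.support
  · exact ⟨P₂, P₁, h.symm, hz₂⟩
  obtain ⟨A, D, rfl⟩ := mem_support_iff_exists_append.1 hz
  obtain ⟨u, hu, M, B, rfl, hM⟩ := D.exists_append_first_mem
    (S := {v | v ∈ P₁.support ∨ v ∈ P₂.support}) (Or.inl P₁.end_mem_support)
  rcases hu with hu₁ | hu₂
  · obtain ⟨N, hN, hzN⟩ := h.exists_through_of_hit_left hW hxz hz₁ (Walk.append_assoc A M B) hu₁
      (fun v hv h₁ => hM v hv (Or.inl h₁)) (fun v hv h₂ => hM v hv (Or.inr h₂))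
    exact ⟨N, P₂, hN, hzN⟩
  · obtain ⟨N, hN, hzN⟩ := h.symm.exists_through_of_hit_left hW hxz hz₂ (Walk.append_assoc A M B)
      hu₂ (fun v hv h₂ => hM v hv (Or.inr h₂)) (fun v hv h₁ => hM v hv (Or.inl h₁))
    exact ⟨N, P₁, hN, hzN⟩

theorem aligned_of_follows {x y b : V} {W : G.Walk x y} {P : G.Walk x b} (hW : W.IsPath)
    (h : P.support.Follows W.support) : Aligned W P := by
  intro u v huW hvW huP hvP hlt
  by_contra hge
  have hvu : P.support.idxOf v < P.support.idxOf u :=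
    lt_of_le_of_ne (not_lt.1 hge) fun huv => hlt.ne (by rw [(idxOf_inj hvP).1 huv])
  have hvuW : [v, u] <+ W.support := by
    refine Sublist.trans ?_ h
    simpa [huW, hvW] using (pair_sublist_of_idxOf_lt huP hvu).filter (· ∈ W.support)
  exact (hW.support_nodup.idxOf_lt_of_pair_sublist hvuW).not_gt hlt

end AlignedPair

/-- Dirac's corollary: if moreover `x` is adjacent to a vertex `z` of `W`, the two
internally disjoint aligned `x,y`-paths can be chosen so that one passes through `z`. -/
theorem stmt_3 {V : Type*} [Fintype V] [DecidableEq V] {G : SimpleGraph V}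
    (hG : TwoConnected G) {x y z : V} (hxy : x ≠ y) (W : G.Walk x y) (hW : W.IsPath)
    (hzW : z ∈ W.support) (hadj : G.Adj x z) :
    ∃ (P1 P2 : G.Walk x y), P1.IsPath ∧ P2.IsPath ∧ P1 ≠ P2 ∧ IntDisjoint P1 P2 ∧
      Aligned W P1 ∧ Aligned W P2 ∧ z ∈ P1.support := by
  obtain ⟨P₁, P₂, hP⟩ := hG.exists_isAlignedPair W hW hxy
  obtain ⟨N₁, N₂, hN, hzN⟩ := hP.exists_mem_left hW hadj hzW
  exact ⟨N₁, N₂, hN.isPath_left, hN.isPath_right, hN.ne, hN.intDisjoint,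
    aligned_of_follows hW hN.follows_left, aligned_of_follows hW hN.follows_right, hzN⟩
end

section
/- Let G be a graph, let (C, P) be a lollipop in G with C = v1, ..., vc, v1 and P = u1, ..., u_{ℓ+1} where u1 = vc, and suppose (C,P) is a best lollipop (no lollipop has a longer cycle, and among those with the same cycle length, none has a longer path). If the end vertex u_{ℓ+1} is adjacent to some vertex vi of C, then ℓ+1 ≤ i ≤ c-ℓ-1. -/
open SimpleGraph

/-
The end `w` of `P`, adjacent to `vᵢ`, closes two new cycles: `w vᵢ vᵢ₋₁ … v₁ v_c P w` of length
`i + ℓ + 1` and `w vᵢ vᵢ₊₁ … v_c P w` of length `c - i + ℓ + 1`. A best lollipop has a longest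
cycle, since every cycle with a trivial path is a lollipop, so both lengths are at most `c`.
-/

namespace SimpleGraph.Walk

variable {V : Type*} {G : SimpleGraph V}

theorem IsPath.append_of_support_inter {x y w : V} {R : G.Walk x y} {P : G.Walk y w}
    (hR : R.IsPath) (hP : P.IsPath) (hRP : ∀ u ∈ R.support, u ∈ P.support → u = y) :
    (R.append P).IsPath := by
  have hPsupp := hP.support_nodup
  rw [← P.cons_tail_support, List.nodup_cons] at hPsupp
  refine IsPath.mk' ?_
  rw [support_append, List.nodup_append]
  refine ⟨hR.support_nodup, hPsupp.2, fun u hu u' hu' huu' => ?_⟩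
  subst huu'
  have hy : u = y := hRP u hu (P.support.mem_of_mem_tail hu')
  exact hPsupp.1 (hy ▸ hu')

theorem IsPath.isCycle_cons_append {x y w : V} {R : G.Walk x y} {P : G.Walk y w}
    (hR : R.IsPath) (hP : P.IsPath) (hRP : ∀ u ∈ R.support, u ∈ P.support → u = y)
    (hx : x ≠ y) (hw : w ≠ y) (h : G.Adj w x) :
    (cons h (R.append P)).IsCycle := by
  refine (cons_isCycle_iff _ h).mpr ⟨hR.append_of_support_inter hP hRP, fun he => ?_⟩
  rw [edges_append, List.mem_append] at he
  rcases he with he | he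
  · exact hw (hRP w (R.fst_mem_support_of_mem_edges he) P.end_mem_support)
  · exact hx (hRP x R.start_mem_support (P.snd_mem_support_of_mem_edges he))

end SimpleGraph.Walk

theorem isLollipop_nil {V : Type*} {G : SimpleGraph V} {u : V} {C : G.Walk u u}
    (hC : C.IsCycle) : IsLollipop C (Walk.nil : G.Walk u u) :=
  ⟨hC, Walk.IsPath.nil, C.start_mem_support, fun _ _ hx => by simpa using hx⟩

theorem IsLollipop.exists_isCycles_of_adj_getVert {V : Type*} {G : SimpleGraph V} {v w : V}
    {C : G.Walk v v} {P : G.Walk v w} (hL : IsLollipop C P) (hw : w ≠ v) {i : ℕ}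
    (hi : 0 < i) (hic : i < C.length) (h : G.Adj w (C.getVert i)) :
    (∃ C' : G.Walk w w, C'.IsCycle ∧ C'.length = i + P.length + 1) ∧
      ∃ C' : G.Walk w w, C'.IsCycle ∧ C'.length = C.length - i + P.length + 1 := by
  obtain ⟨hC, hP, -, hCP⟩ := hL
  have hvi : C.getVert i ≠ v := fun hv => by
    rcases (hC.getVert_endpoint_iff hic.le).mp hv with h0 | hc <;> omega
  have close : ∀ R : G.Walk (C.getVert i) v, R.IsPath → R.support ⊆ C.support →
      (Walk.cons h (R.append P)).IsCycle := fun R hR hRC =>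
    hR.isCycle_cons_append hP (fun u hu huP => hCP u (hRC hu) huP) hvi hw h
  have htake : ((C.take i).reverse).support ⊆ C.support := by
    rw [Walk.support_reverse, Walk.support_take]
    exact fun u hu => List.mem_of_mem_take (List.mem_reverse.mp hu)
  have hdrop : (C.drop i).support ⊆ C.support := by
    rw [Walk.drop_support_eq_support_drop_min]
    exact fun u hu => List.mem_of_mem_drop hu
  refine ⟨⟨_, close _ (hC.isPath_take hic).reverse htake, ?_⟩,
    ⟨_, close _ (hC.isPath_drop hi) hdrop, ?_⟩⟩
  · simp [Walk.take_length, hic.le]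
  · simp [Walk.drop_length]

/-- For a best lollipop `(C, P)` with `C = v₁,…,v_c,v₁`, `P = u₁,…,u_{ℓ+1}`, `u₁ = v_c`:
if the end `u_{ℓ+1}` is adjacent to `vᵢ` (`1 ≤ i ≤ c-1`), then `ℓ+1 ≤ i ≤ c-ℓ-1`. -/
theorem stmt_6 {V : Type*} {G : SimpleGraph V} {v w : V}
    (C : G.Walk v v) (P : G.Walk v w) (hL : IsLollipop C P)
    (hbest : ∀ (v' a' w' : V) (C' : G.Walk v' v') (P' : G.Walk a' w'),
      IsLollipop C' P' →
      ¬ (C.length < C'.length ∨ (C'.length = C.length ∧ P.length < P'.length)))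
    (i : ℕ) (hi1 : 1 ≤ i) (hic : i ≤ C.length - 1)
    (hadj : G.Adj w (C.support.getD i v)) :
    P.length + 1 ≤ i ∧ i + P.length + 1 ≤ C.length := by
  have hlongest : ∀ (u : V) (C' : G.Walk u u), C'.IsCycle → C'.length ≤ C.length :=
    fun u C' hC' => by simpa using (not_or.mp (hbest u u u C' .nil (isLollipop_nil hC'))).1
  have hc := hL.1.three_le_length
  rcases eq_or_ne w v with rfl | hwv
  · have : P.length = 0 := by
      simpa using congrArg (fun p : G.Path w w => p.1.length) (Path.loop_eq ⟨P, hL.2.1⟩)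
    omega
  rw [List.getD_eq_getElem _ _ (by rw [C.length_support]; omega), ← C.getVert_eq_support_getElem (by omega)]
    at hadj
  obtain ⟨⟨C₁, hC₁, hlen₁⟩, ⟨C₂, hC₂, hlen₂⟩⟩ :=
    hL.exists_isCycles_of_adj_getVert hwv hi1 (by omega) hadj
  have := hlongest w C₁ hC₁
  have := hlongest w C₂ hC₂
  omega
end

section
/- Let G be a graph and let (C, P) be a lollipop in G such that no lollipop in G is better than (C, P). Let u be the endpoint of P not on C. Then the neighborhood of u in G is contained in V(C) ∪ V(P). -/
open SimpleGraph

theorem IsLollipop.concat {V : Type*} {G : SimpleGraph V} {v a w b : V}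
    {C : G.Walk v v} {P : G.Walk a w} (hL : IsLollipop C P) (hadj : G.Adj w b)
    (hbC : b ∉ C.support) (hbP : b ∉ P.support) : IsLollipop C (P.concat hadj) := by
  obtain ⟨hC, hP, haC, hmeet⟩ := hL
  refine ⟨hC, hP.concat hbP hadj, haC, fun u huC huP => ?_⟩
  rw [Walk.support_concat, List.mem_append, List.mem_singleton] at huP
  rcases huP with huP | rfl
  · exact hmeet u huC huP
  · exact absurd huC hbC

theorem stmt_7_general {V : Type*} {G : SimpleGraph V} {v w : V}
    (C : G.Walk v v) (P : G.Walk v w) (hL : IsLollipop C P)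
    (hbest : ∀ (v' a' w' : V) (C' : G.Walk v' v') (P' : G.Walk a' w'),
      IsLollipop C' P' →
      ¬ (C.length < C'.length ∨ (C'.length = C.length ∧ P.length < P'.length))) :
    ∀ b : V, G.Adj w b → b ∈ C.support ∨ b ∈ P.support := by
  intro b hadj
  by_contra! hb
  refine hbest v v b C (P.concat hadj) (hL.concat hadj hb.1 hb.2) (Or.inr ⟨rfl, ?_⟩)
  simp [Walk.length_concat]

/-- For a best lollipop `(C, P)`, the endpoint `w` of `P` not on `C` has all of its
neighbors in `V(C) ∪ V(P)`. -/
theorem stmt_7 {V : Type*} {G : SimpleGraph V} {v w : V}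
    (C : G.Walk v v) (P : G.Walk v w) (hL : IsLollipop C P) (hw : w ≠ v)
    (hbest : ∀ (v' a' w' : V) (C' : G.Walk v' v') (P' : G.Walk a' w'),
      IsLollipop C' P' →
      ¬ (C.length < C'.length ∨ (C'.length = C.length ∧ P.length < P'.length))) :
    ∀ b : V, G.Adj w b → b ∈ C.support ∨ b ∈ P.support :=
  stmt_7_general C P hL hbest
end

section
/- Let G be a 2-connected graph on n vertices with a Hamiltonian path. If G has minimum degree at least k and n ≤ 2k, then G has a Hamiltonian cycle. -/
/-!
Ore's rotation argument. Let `x = v₀, v₁, …, vₘ = y` be a Hamiltonian path, so `m = n - 1`.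
All neighbours of `x` and `y` lie on the path, so among its `m` edges `vᵢvᵢ₊₁` exactly `deg x`
have `x ~ vᵢ₊₁` and exactly `deg y` have `y ~ vᵢ`. Since `deg x + deg y ≥ 2k ≥ n > m`, some edge
has both properties, and `x vᵢ₊₁ … y vᵢ … x` is a Hamiltonian cycle; it is a genuine cycle
because `n ≥ 3`.
-/

open SimpleGraph

namespace SimpleGraph

variable {V : Type*} {G : SimpleGraph V}

open Classical in
theorem card_filter_adj_comp_eq_degree {α : Type*} [DecidableEq α] {z : V}
    [Fintype (G.neighborSet z)] {l : List α} {f : α → V} (hf : (l.map f).Nodup)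
    (hz : ∀ w, G.Adj z w → w ∈ l.map f) :
    {a ∈ l.toFinset | G.Adj z (f a)}.card = G.degree z := by
  have hinj : Set.InjOn f {a | a ∈ l.toFinset} := fun a ha b hb =>
    List.inj_on_of_nodup_map hf (List.mem_toFinset.mp ha) (List.mem_toFinset.mp hb)
  rw [← card_neighborFinset_eq_degree, ← Finset.card_image_of_injOn (hinj.mono (Finset.filter_subset _ _))]
  congr 1
  ext w
  have := hz w
  grind [List.mem_toFinset, mem_neighborFinset]

namespace Walk

variable {u v : V}

theorem exists_eq_append_cons_of_mem_darts {p : G.Walk u v} {d : G.Dart} (hd : d ∈ p.darts) :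
    ∃ (q : G.Walk u d.fst) (r : G.Walk d.snd v), p = q.append (cons d.adj r) := by
  induction p with
  | nil => simp at hd
  | cons h p ih =>
    rcases List.mem_cons.mp hd with rfl | hd
    · exact ⟨nil, p, rfl⟩
    · obtain ⟨q, r, rfl⟩ := ih hd
      exact ⟨cons h q, r, rfl⟩

theorem IsPath.cons_isCycle_of_one_lt_length {p : G.Walk v u} (hp : p.IsPath) (h : G.Adj u v)
    (hlen : 1 < p.length) : (cons h p).IsCycle :=
  (cons_isCycle_iff p h).mpr
    ⟨hp, fun he => hlen.ne' (hp.length_eq_one_of_mem_edges (Sym2.eq_swap ▸ he))⟩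

theorem IsPath.exists_mem_darts_adj_snd_adj_fst [Fintype (G.neighborSet u)]
    [Fintype (G.neighborSet v)] {p : G.Walk u v} (hp : p.IsPath)
    (hu : ∀ w, G.Adj u w → w ∈ p.support) (hv : ∀ w, G.Adj v w → w ∈ p.support)
    (hdeg : p.length < G.degree u + G.degree v) :
    ∃ d ∈ p.darts, G.Adj u d.snd ∧ G.Adj v d.fst := by
  classical
  have hsnd : {d ∈ p.darts.toFinset | G.Adj u d.snd}.card = G.degree u := by
    refine card_filter_adj_comp_eq_degree (l := p.darts) (f := (·.snd))
      (by rw [map_snd_darts]; exact hp.support_nodup.tail) fun w hw => ?_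
    rw [map_snd_darts]
    exact ((mem_support_iff p).mp (hu w hw)).resolve_left (G.ne_of_adj hw).symm
  have hfst : {d ∈ p.darts.toFinset | G.Adj v d.fst}.card = G.degree v := by
    refine card_filter_adj_comp_eq_degree (l := p.darts) (f := (·.fst))
      (by rw [map_fst_darts]; exact hp.support_nodup.sublist (List.dropLast_sublist _))
      fun w hw => ?_
    have hw' := hv w hw
    rw [← p.dropLast_support_concat, List.mem_append, List.mem_singleton] at hw'
    rw [map_fst_darts]
    exact hw'.resolve_right (G.ne_of_adj hw).symm
  obtain ⟨d, hd⟩ := Finset.inter_nonempty_of_card_lt_card_add_card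
    (Finset.filter_subset (fun d : G.Dart => G.Adj u d.snd) p.darts.toFinset)
    (Finset.filter_subset (fun d : G.Dart => G.Adj v d.fst) p.darts.toFinset) (by
      rw [hsnd, hfst, List.toFinset_card_of_nodup (darts_nodup_of_support_nodup hp.support_nodup),
        length_darts]
      exact hdeg)
  simp only [Finset.mem_inter, Finset.mem_filter, List.mem_toFinset] at hd
  exact ⟨d, hd.1.1, hd.1.2, hd.2.2⟩

theorem IsPath.exists_isCycle_of_length_lt_degree_add_degree [Fintype (G.neighborSet u)]
    [Fintype (G.neighborSet v)] {p : G.Walk u v} (hp : p.IsPath) (hlen : 2 ≤ p.length)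
    (hu : ∀ w, G.Adj u w → w ∈ p.support) (hv : ∀ w, G.Adj v w → w ∈ p.support)
    (hdeg : p.length < G.degree u + G.degree v) :
    ∃ c : G.Walk u u, c.IsCycle ∧ ∀ w ∈ p.support, w ∈ c.support := by
  obtain ⟨d, hd, hud, hvd⟩ := hp.exists_mem_darts_adj_snd_adj_fst hu hv hdeg
  obtain ⟨q, r, rfl⟩ := exists_eq_append_cons_of_mem_darts hd
  have hsupp : (r.append (cons hvd q.reverse)).support.Perm (q.append (cons d.adj r)).support := by
    simpa [support_append] using (List.reverse_perm _).append_left r.support |>.trans List.perm_append_comm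
  refine ⟨cons hud (r.append (cons hvd q.reverse)), ?_, fun w hw => ?_⟩
  · refine IsPath.cons_isCycle_of_one_lt_length ?_ hud ?_
    · exact (isPath_def _).mpr (hsupp.nodup_iff.mpr hp.support_nodup)
    · simp only [length_append, length_cons, length_reverse] at hlen ⊢
      omega
  · exact List.mem_cons_of_mem _ (hsupp.mem_iff.mpr hw)

end Walk

end SimpleGraph

theorem stmt_10_general {V : Type*} [Fintype V] {G : SimpleGraph V}
    [DecidableRel G.Adj] {k : ℕ} (hG : TwoConnected G)
    (hpath : ∃ (x y : V) (P : G.Walk x y), P.IsPath ∧ ∀ v : V, v ∈ P.support)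
    (hdeg : ∀ v : V, k ≤ G.degree v) (hn : Fintype.card V ≤ 2 * k) :
    ∃ (v : V) (C : G.Walk v v), C.IsCycle ∧ ∀ u : V, u ∈ C.support := by
  classical
  obtain ⟨x, y, P, hP, hPsupp⟩ := hpath
  have hlen : P.length = Fintype.card V - 1 := (hP.isHamiltonian_of_mem hPsupp).length_eq
  have hcard : 3 ≤ Fintype.card V := hG.1
  obtain ⟨C, hC, hCsupp⟩ := hP.exists_isCycle_of_length_lt_degree_add_degree (by omega)
    (fun w _ => hPsupp w) (fun w _ => hPsupp w) (by have := hdeg x; have := hdeg y; omega)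
  exact ⟨x, C, hC, fun w => hCsupp w (hPsupp w)⟩

/-- A 2-connected graph on `n ≤ 2k` vertices with a Hamiltonian path and minimum degree
at least `k` has a Hamiltonian cycle. -/
theorem stmt_10 {V : Type*} [Fintype V] [DecidableEq V] {G : SimpleGraph V}
    [DecidableRel G.Adj] {k : ℕ} (hG : TwoConnected G)
    (hpath : ∃ (x y : V) (P : G.Walk x y), P.IsPath ∧ ∀ v : V, v ∈ P.support)
    (hdeg : ∀ v : V, k ≤ G.degree v) (hn : Fintype.card V ≤ 2 * k) :
    ∃ (v : V) (C : G.Walk v v), C.IsCycle ∧ ∀ u : V, u ∈ C.support :=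
  stmt_10_general hG hpath hdeg hn
end

section
/- Let G be a 2-connected graph on n ≥ 3 vertices with minimum degree at least n/2. Then G has a Hamiltonian cycle. -/
open SimpleGraph

/-!
Dirac's argument. Take a longest path `a = v₀, …, v_k = b`; all neighbours of `a` and `b` lie on
it. If `a ~ v_{i+1}` and `b ~ v_i` for some `i` (pigeonhole, as `deg a + deg b ≥ n > k`), then
`b, v_i, …, v₀, v_{i+1}, …, v_k` closes to a cycle through all `k + 1` path vertices. A vertex
off this cycle has `≥ n/2` neighbours but fewer than `n/2` vertices available outside the cycle,
so it is adjacent to the cycle, and opening the cycle there gives a path longer than `k`.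
-/

open Finset

namespace SimpleGraph

namespace Walk

variable {V : Type*} {G : SimpleGraph V} {u v : V}

def IsLongestPath (p : G.Walk u v) : Prop :=
  p.IsPath ∧ ∀ ⦃x y : V⦄ (q : G.Walk x y), q.IsPath → q.length ≤ p.length

theorem exists_isLongestPath [Finite V] [Nonempty V] (G : SimpleGraph V) :
    ∃ (u v : V) (p : G.Walk u v), p.IsLongestPath := by
  have := Fintype.ofFinite V
  let S : Set ℕ := {l | ∃ (x y : V) (q : G.Walk x y), q.IsPath ∧ q.length = l}
  have hne : S.Nonempty := ⟨0, Classical.arbitrary V, _, nil, IsPath.nil, rfl⟩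
  have hbdd : BddAbove S :=
    ⟨Fintype.card V, by rintro _ ⟨x, y, q, hq, rfl⟩; exact hq.length_lt.le⟩
  obtain ⟨u, v, p, hp, hlen⟩ := Nat.sSup_mem hne hbdd
  exact ⟨u, v, p, hp, fun x y q hq => hlen ▸ le_csSup hbdd ⟨x, y, q, hq, rfl⟩⟩

theorem IsLongestPath.reverse {p : G.Walk u v} (hp : p.IsLongestPath) : p.reverse.IsLongestPath :=
  ⟨hp.1.reverse, by simpa using hp.2⟩

theorem IsLongestPath.mem_support_of_adj_start {p : G.Walk u v} (hp : p.IsLongestPath) {w : V}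
    (h : G.Adj u w) : w ∈ p.support := by
  by_contra hw
  have := hp.2 (cons h.symm p) ((cons_isPath_iff _ _).mpr ⟨hp.1, hw⟩)
  simp at this

theorem IsLongestPath.mem_support_of_adj_end {p : G.Walk u v} (hp : p.IsLongestPath) {w : V}
    (h : G.Adj v w) : w ∈ p.support := by
  simpa using hp.reverse.mem_support_of_adj_start h

theorem IsPath.degree_start_le_length [Fintype V] [DecidableRel G.Adj] {p : G.Walk u v}
    (hp : p.IsPath) (h : ∀ w, G.Adj u w → w ∈ p.support) : G.degree u ≤ p.length := by
  classical
  have hsub : G.neighborFinset u ⊆ p.support.toFinset.erase u := fun w hw => by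
    rw [mem_neighborFinset] at hw
    exact mem_erase.mpr ⟨hw.ne', List.mem_toFinset.mpr (h w hw)⟩
  have := card_le_card hsub
  rwa [card_erase_of_mem (List.mem_toFinset.mpr p.start_mem_support),
    List.toFinset_card_of_nodup hp.support_nodup, length_support, Nat.add_sub_cancel] at this

theorem exists_adj_getVert_succ_adj_getVert [Fintype V] [DecidableRel G.Adj] (p : G.Walk u v)
    (hu : ∀ w, G.Adj u w → w ∈ p.support) (hv : ∀ w, G.Adj v w → w ∈ p.support)
    (h : p.length < G.degree u + G.degree v) :
    ∃ i < p.length, G.Adj u (p.getVert (i + 1)) ∧ G.Adj v (p.getVert i) := by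
  classical
  set S := (range p.length).filter (fun i => G.Adj u (p.getVert (i + 1)))
  set T := (range p.length).filter (fun i => G.Adj v (p.getVert i))
  have hS : G.degree u ≤ #S := by
    refine (card_le_card fun w hw => ?_).trans
      (card_image_le (f := fun i => p.getVert (i + 1)))
    rw [mem_neighborFinset] at hw
    obtain ⟨j, rfl, hj⟩ := mem_support_iff_exists_getVert.mp (hu w hw)
    obtain ⟨i, rfl⟩ : ∃ i, j = i + 1 :=
      Nat.exists_eq_add_one.mpr (Nat.pos_of_ne_zero fun h0 => hw.ne (by simp [h0]))
    refine mem_image.mpr ⟨i, ?_, rfl⟩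
    simp only [mem_filter, mem_range, hw, and_true, S]
    omega
  have hT : G.degree v ≤ #T := by
    refine (card_le_card fun w hw => ?_).trans
      (card_image_le (f := fun i => p.getVert i))
    rw [mem_neighborFinset] at hw
    obtain ⟨j, rfl, hj⟩ := mem_support_iff_exists_getVert.mp (hv w hw)
    have hjk : j ≠ p.length := fun hjk => hw.ne (by simp [hjk])
    refine mem_image.mpr ⟨j, ?_, rfl⟩
    simp only [mem_filter, mem_range, hw, and_true, T]
    omega
  obtain ⟨i, hi⟩ := inter_nonempty_of_card_lt_card_add_card (filter_subset _ _)
    (filter_subset _ _) (by rw [card_range]; omega : #(range p.length) < #S + #T)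
  simp only [mem_inter, mem_filter, mem_range] at hi
  exact ⟨i, hi.1.1, hi.1.2, hi.2.2⟩

theorem IsPath.exists_isCycle_length_eq [DecidableEq V] {p : G.Walk u v} (hp : p.IsPath)
    (h2 : 2 ≤ p.length) {i : ℕ} (hi : i < p.length) (hu : G.Adj u (p.getVert (i + 1)))
    (hv : G.Adj v (p.getVert i)) :
    ∃ C : G.Walk v v, C.IsCycle ∧ C.length = p.length + 1 := by
  let R := (p.take i).reverse.append (cons hu (p.drop (i + 1)))
  have hR : R.IsPath := by
    refine IsPath.mk' ?_
    have hsupp : R.support = (p.support.take (i + 1)).reverse ++ p.support.drop (i + 1) := by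
      simp [R, support_append, support_take, Nat.min_eq_left hi]
    have hperm : R.support.Perm p.support := by
      rw [hsupp]
      exact ((List.reverse_perm _).append_right _).trans
        (List.Perm.of_eq (List.take_append_drop _ _))
    exact hperm.nodup_iff.mpr hp.support_nodup
  have hlen : (cons hv R).length = p.length + 1 := by
    simp only [R, length_cons, length_append, length_reverse, take_length, drop_length]
    omega
  refine ⟨cons hv R, isCycle_iff_isPath_tail_and_le_length.mpr ⟨?_, by omega⟩, hlen⟩
  simpa using hR

theorem IsCycle.card_support_toFinset [DecidableEq V] {C : G.Walk u u} (hC : C.IsCycle) :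
    #C.support.toFinset = C.length := by
  have hlen : C.support.tail.length = C.length := by simp
  rw [← C.cons_tail_support, List.toFinset_cons,
    insert_eq_of_mem (List.mem_toFinset.mpr (end_mem_tail_support hC.not_nil)),
    List.toFinset_card_of_nodup hC.support_nodup, hlen]

theorem IsCycle.exists_isPath_length_eq_of_adj [DecidableEq V] {C : G.Walk u u}
    (hC : C.IsCycle) {c y : V} (hc : c ∈ C.support) (hy : y ∉ C.support) (hyc : G.Adj y c) :
    ∃ (x : V) (q : G.Walk y x), q.IsPath ∧ q.length = C.length := by
  let C' := C.rotate c hc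
  have hC' : C'.IsCycle := hC.rotate hc
  refine ⟨_, cons hyc C'.tail.reverse,
    (cons_isPath_iff _ _).mpr ⟨hC'.isPath_tail.reverse, ?_⟩, ?_⟩
  · rw [support_reverse, List.mem_reverse, support_tail_of_not_nil _ hC'.not_nil]
    exact fun h => hy ((C.mem_support_rotate_iff c hc).mp (List.mem_of_mem_tail h))
  · rw [length_cons, length_reverse, length_tail_add_one hC'.not_nil, length_rotate]

end Walk

variable {V : Type*} {G : SimpleGraph V}

theorem exists_mem_adj_of_card_lt [Fintype V] [DecidableEq V] [DecidableRel G.Adj]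
    (s : Finset V) {y : V} (hy : y ∉ s) (h : Fintype.card V < #s + G.degree y + 1) :
    ∃ c ∈ s, G.Adj y c := by
  by_contra! hs
  have hdisj : Disjoint s (G.neighborFinset y) :=
    Finset.disjoint_left.mpr fun _ hc hyc => hs _ hc ((mem_neighborFinset _ _ _).mp hyc)
  have hyn : y ∉ s ∪ G.neighborFinset y := by simp [hy]
  have := (insert y (s ∪ G.neighborFinset y)).card_le_univ
  rw [card_insert_of_notMem hyn, card_union_of_disjoint hdisj, card_neighborFinset_eq_degree]
    at this
  omega

open Walk in
theorem isHamiltonian_of_card_le_two_mul_minDegree [Fintype V] [DecidableEq V]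
    [DecidableRel G.Adj] (h3 : 3 ≤ Fintype.card V) (hδ : Fintype.card V ≤ 2 * G.minDegree) :
    G.IsHamiltonian := by
  intro _
  have : Nonempty V := Fintype.card_pos_iff.mp (by omega)
  have hdeg (v : V) : Fintype.card V ≤ 2 * G.degree v :=
    hδ.trans (Nat.mul_le_mul_left 2 (G.minDegree_le_degree v))
  obtain ⟨a, b, p, hp⟩ := exists_isLongestPath G
  have hpn := hp.1.length_lt
  have hak := hp.1.degree_start_le_length fun _ => hp.mem_support_of_adj_start
  have ha := hdeg a
  have hb := hdeg b
  obtain ⟨i, hi, hai, hbi⟩ := p.exists_adj_getVert_succ_adj_getVert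
    (fun _ => hp.mem_support_of_adj_start) (fun _ => hp.mem_support_of_adj_end) (by omega)
  obtain ⟨C, hC, hClen⟩ := hp.1.exists_isCycle_length_eq (by omega) hi hai hbi
  refine ⟨b, C, isHamiltonianCycle_iff_isCycle_and_length_eq.mpr ⟨hC, ?_⟩⟩
  by_contra hCn
  obtain ⟨y, -, hy⟩ := exists_mem_notMem_of_card_lt_card (s := C.support.toFinset) (t := univ)
    (by rw [hC.card_support_toFinset, card_univ]; omega)
  obtain ⟨c, hc, hyc⟩ := G.exists_mem_adj_of_card_lt _ hy
    (by rw [hC.card_support_toFinset]; have := hdeg y; omega)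
  obtain ⟨x, q, hq, hqlen⟩ := hC.exists_isPath_length_eq_of_adj (List.mem_toFinset.mp hc)
    (fun h => hy (List.mem_toFinset.mpr h)) hyc
  have := hp.2 q hq
  omega

end SimpleGraph

theorem stmt_11_general {V : Type*} [Fintype V] [DecidableEq V] {G : SimpleGraph V}
    [DecidableRel G.Adj] (hn : 3 ≤ Fintype.card V)
    (hdeg : ∀ v : V, (Fintype.card V : ℝ) / 2 ≤ (G.degree v : ℝ)) :
    ∃ (v : V) (C : G.Walk v v), C.IsCycle ∧ ∀ u : V, u ∈ C.support := by
  have : Nonempty V := Fintype.card_pos_iff.mp (by omega)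
  obtain ⟨w, hw⟩ := G.exists_minimal_degree_vertex
  have hδ : Fintype.card V ≤ 2 * G.minDegree := by
    have := hdeg w
    rw [hw]
    exact_mod_cast (by linarith : (Fintype.card V : ℝ) ≤ 2 * G.degree w)
  obtain ⟨v, C, hC⟩ := isHamiltonian_of_card_le_two_mul_minDegree hn hδ (by omega)
  exact ⟨v, C, hC.isCycle, hC.mem_support⟩

/-- A 2-connected graph on `n ≥ 3` vertices with minimum degree at least `n/2` has a
Hamiltonian cycle. -/
theorem stmt_11 {V : Type*} [Fintype V] [DecidableEq V] {G : SimpleGraph V}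
    [DecidableRel G.Adj] (hn : 3 ≤ Fintype.card V) (hG : TwoConnected G)
    (hdeg : ∀ v : V, (Fintype.card V : ℝ) / 2 ≤ (G.degree v : ℝ)) :
    ∃ (v : V) (C : G.Walk v v), C.IsCycle ∧ ∀ u : V, u ∈ C.support :=
  stmt_11_general hn hdeg
end

section
/- Let G be a 2-connected graph and let C be a cycle in G with V(C) ≠ V(G). Then there exists a lollipop (C, P) in G with path P of length at least 1. -/
open SimpleGraph

lemma aux16 {V : Type*} {G : SimpleGraph V} {v : V} (C : G.Walk v v) :
    ∀ {u w : V} (Q : G.Walk u w), Q.IsPath → u ∉ C.support → w ∈ C.support →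
    ∃ (a : V) (P : G.Walk a u), P.IsPath ∧ a ∈ C.support ∧
      (∀ x ∈ C.support, x ∈ P.support → x = a) ∧ 1 ≤ P.length ∧
      ∀ x ∈ P.support, x ∈ Q.support := by
  intro u w Q
  induction Q with
  | nil => intro _ hu hw; exact absurd hw hu
  | cons h q ih =>
    rename_i u u' w
    intro hQ hu hw
    by_cases hu' : u' ∈ C.support
    · refine ⟨u', Walk.cons h.symm Walk.nil, ?_, hu', ?_, by simp, ?_⟩
      · simp [Walk.isPath_def, h.ne']
      · intro x hxC hxP
        simp [Walk.support_cons] at hxP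
        rcases hxP with rfl | rfl
        · rfl
        · exact absurd hxC hu
      · intro x hx
        simp [Walk.support_cons] at hx ⊢
        rcases hx with rfl | rfl
        · right; exact q.start_mem_support
        · left; rfl
    · obtain ⟨a, P, hP, haC, hmeet, hlen, hsub⟩ := ih hQ.of_cons hu' hw
      have huP : u ∉ P.support := by
        intro huP
        have := hsub u huP
        exact (Walk.cons_isPath_iff _ _ |>.mp hQ).2 this
      have hP' : (Walk.cons h P.reverse).IsPath := by
        rw [Walk.cons_isPath_iff]
        exact ⟨hP.reverse, by rwa [Walk.support_reverse, List.mem_reverse]⟩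
      have hsupp : ∀ x, x ∈ (Walk.cons h P.reverse).reverse.support ↔ x = u ∨ x ∈ P.support := by
        intro x
        rw [Walk.support_reverse, List.mem_reverse, Walk.support_cons, List.mem_cons,
          Walk.support_reverse, List.mem_reverse]
      refine ⟨a, (Walk.cons h P.reverse).reverse, hP'.reverse, haC, ?_, ?_, ?_⟩
      · intro x hxC hxP
        rcases (hsupp x).mp hxP with rfl | hx
        · exact absurd hxC hu
        · exact hmeet x hxC hx
      · rw [Walk.length_reverse, Walk.length_cons]; omega
      · intro x hx
        rcases (hsupp x).mp hx with rfl | hx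
        · exact Walk.start_mem_support _
        · exact List.mem_cons_of_mem _ (hsub x hx)

/-- If `G` is 2-connected and `C` is a cycle not covering all vertices, then there is a
lollipop `(C, P)` with `P` of length at least 1. -/
theorem stmt_16 {V : Type*} [Fintype V] {G : SimpleGraph V} (hG : TwoConnected G)
    {v : V} (C : G.Walk v v) (hC : C.IsCycle) (hcover : ∃ u : V, u ∉ C.support) :
    ∃ (a w : V) (P : G.Walk a w), IsLollipop C P ∧ 1 ≤ P.length := by
  classical
  obtain ⟨u, hu⟩ := hcover
  obtain ⟨Q⟩ := hG.2.1 u v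
  obtain ⟨a, P, hP, haC, hmeet, hlen, -⟩ :=
    aux16 C Q.toPath.1 Q.toPath.2 hu C.start_mem_support
  exact ⟨a, u, P, ⟨hC, hP, haC, hmeet⟩, hlen⟩
end

section
/- Let G be a 2-connected graph with minimum degree at least k ≥ 2 and n > k vertices, and suppose G has no cycle on all n vertices. Then G contains a cycle C and a vertex u ∉ V(C) such that u has at least one neighbor outside V(C) or G contains a cycle of length at least 2k. -/
/-!
Take a longest cycle `C`; one exists because a connected graph of minimum degree at least `2`
is not a tree. As `G` is not Hamiltonian, some vertex `u` lies off `C`. If all neighbours of `u`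
lie on `C`, no two of them are consecutive on `C`, for otherwise inserting `u` between them
would give a longer cycle. Hence the at least `k` neighbours of `u` and their successors along
`C` are `2k` distinct vertices of `C`.
-/

open SimpleGraph

namespace SimpleGraph

variable {V : Type*} {G : SimpleGraph V}

namespace Walk

lemma mem_support_tail_of_mem_support {u x : V} {p : G.Walk u u} (hp : ¬p.Nil)
    (hx : x ∈ p.support) : x ∈ p.support.tail := by
  rcases p.mem_support_iff.1 hx with rfl | hx
  · exact end_mem_tail_support hp
  · exact hx

lemma exists_mem_darts_fst_eq {u x : V} {p : G.Walk u u} (hp : ¬p.Nil) (hx : x ∈ p.support) :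
    ∃ d ∈ p.darts, d.fst = x := by
  have hx' := p.tail_support_perm_dropLast_support.subset (mem_support_tail_of_mem_support hp hx)
  simpa [← map_fst_darts] using hx'

lemma exists_mem_darts_snd_eq {u x : V} {p : G.Walk u u} (hp : ¬p.Nil) (hx : x ∈ p.support) :
    ∃ d ∈ p.darts, d.snd = x := by
  simpa [← map_snd_darts] using mem_support_tail_of_mem_support hp hx

open Finset in
/-- The darts leaving `N` and the darts entering `N` are disjoint and each cover `N`. -/
lemma two_mul_card_le_length {u : V} {p : G.Walk u u} (hp : ¬p.Nil) {N : Finset V}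
    (hN : ∀ x ∈ N, x ∈ p.support) (hind : ∀ d ∈ p.darts, d.fst ∈ N → d.snd ∉ N) :
    2 * #N ≤ p.length := by
  classical
  set A := p.darts.toFinset.filter (·.fst ∈ N)
  set B := p.darts.toFinset.filter (·.snd ∈ N)
  have hA : N ⊆ A.image (·.fst) := fun x hx ↦ by
    obtain ⟨d, hd, rfl⟩ := exists_mem_darts_fst_eq hp (hN x hx)
    exact mem_image_of_mem _ (by simp [A, hd, hx])
  have hB : N ⊆ B.image (·.snd) := fun x hx ↦ by
    obtain ⟨d, hd, rfl⟩ := exists_mem_darts_snd_eq hp (hN x hx)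
    exact mem_image_of_mem _ (by simp [B, hd, hx])
  have hAB : Disjoint A B := disjoint_filter.2 fun d hd ha ↦ hind d (by simpa using hd) ha
  calc 2 * #N = #N + #N := two_mul _
    _ ≤ #A + #B := add_le_add ((card_le_card hA).trans card_image_le)
        ((card_le_card hB).trans card_image_le)
    _ = #(A ∪ B) := (card_union_of_disjoint hAB).symm
    _ ≤ #p.darts.toFinset := card_le_card (union_subset (filter_subset _ _) (filter_subset _ _))
    _ ≤ p.length := p.length_darts ▸ p.darts.toFinset_card_le

lemma IsCycle.exists_isPath_of_mem_edges {v a b : V} {c : G.Walk v v} (hc : c.IsCycle)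
    (h : s(a, b) ∈ c.edges) :
    ∃ P : G.Walk b a, P.IsPath ∧ P.length + 1 = c.length ∧
      ∀ x ∈ P.support, x ∈ c.support := by
  classical
  have ha : a ∈ c.support := c.fst_mem_support_of_mem_edges h
  set r := c.rotate a ha
  have hr : r.IsCycle := hc.rotate ha
  have hlen : r.length = c.length := length_rotate ..
  have hsupp : ∀ x ∈ r.support, x ∈ c.support := fun x hx ↦ (mem_support_rotate_iff ..).1 hx
  have hadj : b ∈ r.toSubgraph.neighborSet a :=
    (adj_toSubgraph_iff_mem_edges).2 ((rotate_edges c a ha).mem_iff.2 h)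
  rw [hr.neighborSet_toSubgraph_endpoint] at hadj
  obtain rfl | rfl := hadj
  · refine ⟨r.tail, hr.isPath_tail, hlen ▸ length_tail_add_one hr.not_nil,
      fun x hx ↦ hsupp x ?_⟩
    rw [support_tail_of_not_nil _ hr.not_nil] at hx
    exact List.mem_of_mem_tail hx
  · refine ⟨r.dropLast.reverse, hr.isPath_dropLast.reverse, ?_, fun x hx ↦ hsupp x ?_⟩
    · rw [length_reverse, length_dropLast_add_one hr.not_nil, hlen]
    · rw [support_reverse, List.mem_reverse, support_dropLast hr.not_nil] at hx
      exact List.mem_of_mem_dropLast hx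

lemma IsPath.isCycle_cons_concat {u a b : V} {P : G.Walk b a} (hP : P.IsPath) (hab : a ≠ b)
    (hu : u ∉ P.support) (hub : G.Adj u b) (hau : G.Adj a u) :
    (cons hub (P.concat hau)).IsCycle := by
  refine (cons_isCycle_iff _ _).2 ⟨hP.concat hu hau, fun h ↦ ?_⟩
  rw [edges_concat, List.concat_eq_append, List.mem_append, List.mem_singleton, Sym2.eq_iff] at h
  rcases h with h | ⟨rfl, -⟩ | ⟨-, rfl⟩
  · exact hu (P.fst_mem_support_of_mem_edges h)
  · exact hu P.end_mem_support
  · exact hab rfl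

lemma IsCycle.exists_isCycle_length_eq_add_one {v u a b : V} {c : G.Walk v v} (hc : c.IsCycle)
    (hu : u ∉ c.support) (h : s(a, b) ∈ c.edges) (hua : G.Adj u a) (hub : G.Adj u b) :
    ∃ (w : V) (d : G.Walk w w), d.IsCycle ∧ d.length = c.length + 1 := by
  obtain ⟨P, hP, hlen, hsupp⟩ := hc.exists_isPath_of_mem_edges h
  refine ⟨u, cons hub (P.concat hua.symm), ?_, by simp [← hlen]⟩
  exact hP.isCycle_cons_concat (c.adj_of_mem_edges h).ne (fun hx ↦ hu (hsupp u hx)) hub hua.symm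

end Walk

lemma Connected.exists_isCycle_of_two_le_degree [Fintype V] [DecidableRel G.Adj]
    (hG : G.Connected) (hdeg : ∀ v, 2 ≤ G.degree v) :
    ∃ (v : V) (c : G.Walk v v), c.IsCycle := by
  by_contra! hacyc
  have : Nontrivial V := by
    obtain ⟨v⟩ := hG.nonempty
    obtain ⟨w, hw⟩ := G.degree_pos_iff_exists_adj v |>.1 (by linarith [hdeg v])
    exact ⟨v, w, hw.ne⟩
  obtain ⟨v, hv⟩ := IsTree.exists_vert_degree_one_of_nontrivial ⟨hG, hacyc⟩
  linarith [hdeg v]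

lemma exists_isCycle_forall_length_le [Fintype V] (h : ∃ (v : V) (c : G.Walk v v), c.IsCycle) :
    ∃ (v : V) (c : G.Walk v v), c.IsCycle ∧
      ∀ (w : V) (d : G.Walk w w), d.IsCycle → d.length ≤ c.length := by
  classical
  let IsCycleLength (n : ℕ) : Prop := ∃ (v : V) (c : G.Walk v v), c.IsCycle ∧ c.length = n
  have hle : ∀ n, IsCycleLength n → n ≤ Fintype.card V := by
    rintro _ ⟨v, c, hc, rfl⟩
    have := hc.isPath_tail.length_lt
    rw [Walk.length_tail] at this
    omega
  obtain ⟨v, c, hc⟩ := h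
  obtain ⟨w, d, hd, hlen⟩ :=
    Nat.findGreatest_spec (P := IsCycleLength) (hle _ ⟨v, c, hc, rfl⟩) ⟨v, c, hc, rfl⟩
  refine ⟨w, d, hd, fun x e he ↦ hlen ▸ ?_⟩
  exact Nat.le_findGreatest (P := IsCycleLength) (hle _ ⟨x, e, he, rfl⟩) ⟨x, e, he, rfl⟩

lemma Walk.IsCycle.two_mul_degree_le_length [Fintype V] [DecidableRel G.Adj] {v u : V}
    {c : G.Walk v v} (hc : c.IsCycle)
    (hmax : ∀ (w : V) (d : G.Walk w w), d.IsCycle → d.length ≤ c.length)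
    (hu : u ∉ c.support) (hN : ∀ x, G.Adj u x → x ∈ c.support) :
    2 * G.degree u ≤ c.length := by
  rw [← card_neighborFinset_eq_degree]
  refine c.two_mul_card_le_length hc.not_nil (by simpa using hN) fun d hd ha hb ↦ ?_
  rw [mem_neighborFinset] at ha hb
  have hedge : s(d.fst, d.snd) ∈ c.edges := c.edges_eq_map_darts ▸ List.mem_map_of_mem hd
  obtain ⟨w, e, he, hlen⟩ := hc.exists_isCycle_length_eq_add_one hu hedge ha hb
  linarith [hmax w e he]

end SimpleGraph

theorem stmt_18_general {V : Type*} [Fintype V] {G : SimpleGraph V}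
    [DecidableRel G.Adj] {k : ℕ} (hk : 2 ≤ k)
    (hG : TwoConnected G) (hdeg : ∀ v : V, k ≤ G.degree v)
    (hnoham : ¬ ∃ (v : V) (C : G.Walk v v), C.IsCycle ∧ ∀ u : V, u ∈ C.support) :
    (∃ (v : V) (C : G.Walk v v) (u b : V),
        C.IsCycle ∧ u ∉ C.support ∧ G.Adj u b ∧ b ∉ C.support) ∨
      (∃ (v : V) (C : G.Walk v v), C.IsCycle ∧ 2 * k ≤ C.length) := by
  obtain ⟨v, C, hC, hmax⟩ := exists_isCycle_forall_length_le
    (hG.2.1.exists_isCycle_of_two_le_degree fun v ↦ hk.trans (hdeg v))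
  obtain ⟨u, hu⟩ : ∃ u, u ∉ C.support := by
    by_contra! hall
    exact hnoham ⟨v, C, hC, hall⟩
  by_cases hout : ∃ b, G.Adj u b ∧ b ∉ C.support
  · obtain ⟨b, hub, hb⟩ := hout
    exact .inl ⟨v, C, u, b, hC, hu, hub, hb⟩
  · push Not at hout
    exact .inr ⟨v, C, hC, (Nat.mul_le_mul_left 2 (hdeg u)).trans
      (hC.two_mul_degree_le_length hmax hu hout)⟩

/-- In a non-Hamiltonian 2-connected graph with minimum degree at least `k ≥ 2`: either
some cycle `C` has an off-cycle vertex `u` with a neighbor off `C`, or `G` has a cycle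
of length at least `2k`. -/
theorem stmt_18 {V : Type*} [Fintype V] [DecidableEq V] {G : SimpleGraph V}
    [DecidableRel G.Adj] {k : ℕ} (hk : 2 ≤ k) (hn : k < Fintype.card V)
    (hG : TwoConnected G) (hdeg : ∀ v : V, k ≤ G.degree v)
    (hnoham : ¬ ∃ (v : V) (C : G.Walk v v), C.IsCycle ∧ ∀ u : V, u ∈ C.support) :
    (∃ (v : V) (C : G.Walk v v) (u b : V),
        C.IsCycle ∧ u ∉ C.support ∧ G.Adj u b ∧ b ∉ C.support) ∨
      (∃ (v : V) (C : G.Walk v v), C.IsCycle ∧ 2 * k ≤ C.length) :=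
  stmt_18_general hk hG hdeg hnoham
end

section
/- Let G be a graph, C a longest cycle in G with c vertices, and u a vertex not on C adjacent to a vertex vc of C. Let P = vc, u be the path of length 1, and suppose (C, P) is a best lollipop and all neighbors of u lie in V(C) ∪ {u}. Then the degree of u satisfies d(u) ≤ ⌈(c-1)/2⌉. -/
/-!
Since `C` is a longest cycle, `u` cannot be adjacent to both ends of an edge of `C`: replacing
that edge by the detour through `u` would give a longer cycle. Every neighbour of `u` lies on `C`,
where it is the tail of one edge and the head of another; as no edge is counted twice, the `c`
edges of `C` number at least `2 d(u)`.
-/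

open SimpleGraph

open Finset

namespace List

theorem Nodup.countP_mem_eq_card {α : Type*} [DecidableEq α] {l : List α} (hl : l.Nodup)
    {S : Finset α} (hS : ∀ x ∈ S, x ∈ l) : l.countP (· ∈ S) = #S := by
  rw [countP_eq_length_filter, ← toFinset_card_of_nodup (hl.filter _), toFinset_filter]
  congr 1
  ext x
  simpa using fun hx => hS x hx

end List

namespace SimpleGraph.Walk

variable {V : Type*} {G : SimpleGraph V}

theorem IsCycle.append_comm {u v : V} {p : G.Walk u v} {q : G.Walk v u}
    (h : (p.append q).IsCycle) : (q.append p).IsCycle := by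
  rw [isCycle_def, isTrail_def, edges_append, tail_support_append] at h ⊢
  obtain ⟨hedges, hne, hsupp⟩ := h
  refine ⟨List.perm_append_comm.nodup_iff.mp hedges, ?_, List.perm_append_comm.nodup_iff.mp hsupp⟩
  simp only [Ne, eq_nil_iff_nil, nil_append_iff] at hne ⊢
  tauto

theorem IsCycle.exists_isCycle_length_succ {v u : V} {C : G.Walk v v} (hC : C.IsCycle)
    (hu : u ∉ C.support) {d : G.Dart} (hd : d ∈ C.darts) (h₁ : G.Adj d.fst u)
    (h₂ : G.Adj u d.snd) :
    ∃ W : G.Walk d.fst d.fst, W.IsCycle ∧ W.length = C.length + 1 := by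
  obtain ⟨p, q, rfl⟩ := (isSubwalk_toWalk_adj_iff_mem_darts C).mpr hd
  have hpath : (q.append p).IsPath := by
    have := hC.append_comm
    rw [append_assoc] at this
    exact this.isPath_of_append_left (by simp)
  have huqp : u ∉ (q.append p).support := by
    simp only [mem_support_append_iff] at hu ⊢
    tauto
  refine ⟨cons h₁ (cons h₂ (q.append p)), ?_, by simp only [length_cons, length_append, Adj.toWalk, length_nil]; omega⟩
  rw [cons_isCycle_iff, cons_isPath_iff, edges_cons, List.mem_cons, Sym2.eq_iff]
  refine ⟨⟨hpath, huqp⟩, ?_⟩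
  rintro ((⟨-, rfl⟩ | ⟨h, -⟩) | he)
  · exact h₂.ne rfl
  · exact d.adj.ne h
  · exact huqp ((q.append p).snd_mem_support_of_mem_edges he)

theorem IsCycle.two_mul_card_le_length [DecidableEq V] {v : V} {C : G.Walk v v}
    (hC : C.IsCycle) {S : Finset V} (hS : ∀ x ∈ S, x ∈ C.support)
    (hindep : ∀ d ∈ C.darts, d.fst ∈ S → d.snd ∉ S) : 2 * #S ≤ C.length := by
  have hS_tail : ∀ x ∈ S, x ∈ C.support.tail := fun x hx => by
    rcases C.cons_tail_support.symm ▸ hS x hx with _ | ⟨_, h⟩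
    · exact end_mem_tail_support hC.not_nil
    · exact h
  have hsnd : C.darts.countP (fun d => d.snd ∈ S) = #S := by
    rw [← hC.support_nodup.countP_mem_eq_card hS_tail, ← map_snd_darts, List.countP_map]
    rfl
  have hfst : C.darts.countP (fun d => d.fst ∈ S) = #S := by
    rw [← hC.support_nodup.countP_mem_eq_card hS_tail,
      C.tail_support_perm_dropLast_support.countP_eq, ← map_fst_darts, List.countP_map]
    rfl
  have hsplit := List.length_eq_countP_add_countP (fun d : G.Dart => d.fst ∈ S) (l := C.darts)
  have hle := List.countP_mono_left (l := C.darts) (p := fun d => d.snd ∈ S)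
    (q := fun d => ¬ decide (d.fst ∈ S)) fun d hd h => by
      simpa using fun hf => hindep d hd hf (by simpa using h)
  rw [length_darts] at hsplit
  omega

end SimpleGraph.Walk

theorem stmt_19_general {V : Type*} [Fintype V] {G : SimpleGraph V}
    [DecidableRel G.Adj] {v u : V} (C : G.Walk v v) (hC : C.IsCycle)
    (hmax : ∀ (x : V) (C' : G.Walk x x), C'.IsCycle → C'.length ≤ C.length)
    (hu : u ∉ C.support)
    (hnbr : ∀ b : V, G.Adj u b → b ∈ C.support ∨ b = u) :
    G.degree u ≤ ((C.length - 1) + 1) / 2 := by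
  classical
  have hsub : ∀ b ∈ G.neighborFinset u, b ∈ C.support := fun b hb => by
    have hadj := (G.mem_neighborFinset u b).mp hb
    exact (hnbr b hadj).resolve_right hadj.ne'
  have hindep : ∀ d ∈ C.darts, d.fst ∈ G.neighborFinset u → d.snd ∉ G.neighborFinset u := by
    intro d hd h₁ h₂
    rw [mem_neighborFinset] at h₁ h₂
    obtain ⟨W, hW, hlen⟩ := hC.exists_isCycle_length_succ hu hd h₁.symm h₂
    have hlongest := hmax _ W hW
    omega
  have hcard := hC.two_mul_card_le_length hsub hindep
  rw [card_neighborFinset_eq_degree] at hcard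
  omega

/-- Case 1 of Dirac's proof with `ℓ = 1`: if `C` is a longest cycle (with `c` vertices),
`u ∉ V(C)` is adjacent to `v ∈ V(C)`, the lollipop `(C, v u)` is best, and all neighbors
of `u` lie in `V(C) ∪ {u}`, then `d(u) ≤ ⌈(c-1)/2⌉`. -/
theorem stmt_19 {V : Type*} [Fintype V] [DecidableEq V] {G : SimpleGraph V}
    [DecidableRel G.Adj] {v u : V} (C : G.Walk v v) (hC : C.IsCycle)
    (hmax : ∀ (x : V) (C' : G.Walk x x), C'.IsCycle → C'.length ≤ C.length)
    (hu : u ∉ C.support) (hadj : G.Adj v u)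
    (hbest : ∀ (v' a' w' : V) (C' : G.Walk v' v') (P' : G.Walk a' w'),
      IsLollipop C' P' →
      ¬ (C.length < C'.length ∨
          (C'.length = C.length ∧
            (SimpleGraph.Walk.cons hadj SimpleGraph.Walk.nil : G.Walk v u).length <
              P'.length)))
    (hnbr : ∀ b : V, G.Adj u b → b ∈ C.support ∨ b = u) :
    G.degree u ≤ ((C.length - 1) + 1) / 2 :=
  stmt_19_general C hC hmax hu hnbr
end
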